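/- arXiv:2408.15306 — 8 statements merged into one kernel-verified Lean document; each statement's English description precedes it below -/
import Mathlib

section
/- For self-adjoint operators ω and Δ on a d-dimensional Hilbert space with ω + Δ ≥ 0, the von Neumann entropy satisfies S(ω + Δ) ≤ H(λ^↓(Δ) + λ^↑(ω)), where H is the Shannon entropy of the (non-negative) vector of entries. -/
/-!
Let `v = λ↓(Δ) + λ↑(ω)`. Since `λ↓(-ω) = -λ↑(ω)`, Lidskii's inequality
`∑ i ∈ T, (λ↓ᵢ(A + B) - λ↓ᵢ(A)) ≤ ∑ j < #T, λ↓ⱼ(B)` for `A = -ω`, `B = ω + Δ` says that `v` is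
majorized by the spectrum of `ω + Δ`. Lidskii's inequality follows from the Courant–Fischer
comparison of eigenvalues: with `c = λ↓(B)` at position `#T - 1`, the positive part `P` of `B - c`
satisfies `A + B - c ≤ A + P` and `A ≤ A + P`, and its trace is `∑ j < #T, (λ↓ⱼ(B) - c)`.
Finally the Shannon entropy is Schur concave: bounding `η` by its tangents at the sorted entries of
`v` and summing by parts gives `H(λ(ω + Δ)) ≤ H(v)`.
-/

open Matrix BigOperators
open scoped ComplexOrder

noncomputable section

/-- `η(x) = -x log x` (with `log 0 = 0` convention). -/
def eta (x : ℝ) : ℝ := -(x * Real.log x)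

/-- Shannon entropy of a (non-negative) vector. -/
def shannonH {n : ℕ} (p : Fin n → ℝ) : ℝ := ∑ i, eta (p i)

/-- Binary entropy `h(ε) = -ε log ε - (1-ε) log(1-ε)`. -/
def binEnt (x : ℝ) : ℝ := -(x * Real.log x) - ((1 - x) * Real.log (1 - x))

/-- Eigenvalues of a Hermitian matrix in non-decreasing order. -/
def eigUp {d : ℕ} (A : Matrix (Fin d) (Fin d) ℂ) (hA : A.IsHermitian) : Fin d → ℝ :=
  hA.eigenvalues ∘ Tuple.sort hA.eigenvalues

/-- Eigenvalues of a Hermitian matrix in non-increasing order. -/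
def eigDown {d : ℕ} (A : Matrix (Fin d) (Fin d) ℂ) (hA : A.IsHermitian) : Fin d → ℝ :=
  fun i => eigUp A hA i.rev

/-- Entries of a vector rearranged in non-increasing order. -/
def sortDown {n : ℕ} (x : Fin n → ℝ) : Fin n → ℝ :=
  fun i => (x ∘ Tuple.sort x) i.rev

/-- `Majorizes y x` : the vector `x` is majorized by the vector `y`. -/
def Majorizes {n : ℕ} (y x : Fin n → ℝ) : Prop :=
  (∀ k : ℕ, ∑ j ∈ Finset.univ.filter (fun j : Fin n => (j : ℕ) < k), sortDown x j ≤
            ∑ j ∈ Finset.univ.filter (fun j : Fin n => (j : ℕ) < k), sortDown y j) ∧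
  ∑ j, x j = ∑ j, y j

/-- Von Neumann entropy `S(A) = -Tr(A log A)` expressed via eigenvalues. -/
def vnEntropy {n : Type*} [Fintype n] [DecidableEq n] (A : Matrix n n ℂ) : ℝ :=
  if hA : A.IsHermitian then ∑ i, eta (hA.eigenvalues i) else 0

/-- Trace norm of a Hermitian matrix: sum of absolute values of eigenvalues. -/
def traceNorm {n : Type*} [Fintype n] [DecidableEq n] (A : Matrix n n ℂ) : ℝ :=
  if hA : A.IsHermitian then ∑ i, |hA.eigenvalues i| else 0

/-- A density matrix: positive semi-definite with unit trace. -/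
def IsDensity {n : Type*} [Fintype n] [DecidableEq n] (ρ : Matrix n n ℂ) : Prop :=
  ρ.PosSemidef ∧ ρ.trace = 1

/-- Matrix logarithm via the spectral decomposition (with `log 0 = 0` convention). -/
def mlog {n : Type*} [Fintype n] [DecidableEq n] (A : Matrix n n ℂ) : Matrix n n ℂ :=
  if hA : A.IsHermitian then
    (hA.eigenvectorUnitary : Matrix n n ℂ)
      * Matrix.diagonal (fun i => (Real.log (hA.eigenvalues i) : ℂ))
      * (star (hA.eigenvectorUnitary : Matrix n n ℂ))
  else 0

/-- Umegaki relative entropy `D(ρ‖σ) = Tr(ρ (log ρ - log σ))`. -/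
def relEnt {n : Type*} [Fintype n] [DecidableEq n] (ρ σ : Matrix n n ℂ) : ℝ :=
  ((ρ * (mlog ρ - mlog σ)).trace).re

/-- Max-relative entropy `D_max(ρ‖σ) = inf {λ > 0 : ρ ≤ e^λ σ}`. -/
def dMax {n : Type*} [Fintype n] [DecidableEq n] (ρ σ : Matrix n n ℂ) : ℝ :=
  sInf {l : ℝ | 0 < l ∧ (Real.exp l • σ - ρ).PosSemidef}

/-- Partial trace over the first tensor factor. -/
def ptraceA {dA dB : ℕ} (ρ : Matrix (Fin dA × Fin dB) (Fin dA × Fin dB) ℂ) :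
    Matrix (Fin dB) (Fin dB) ℂ :=
  Matrix.of fun i j => ∑ a, ρ (a, i) (a, j)

/-- Conditional entropy `S(A|B)_ρ = S(ρ_{AB}) - S(ρ_B)`. -/
def condEnt {dA dB : ℕ} (ρ : Matrix (Fin dA × Fin dB) (Fin dA × Fin dB) ℂ) : ℝ :=
  vnEntropy ρ - vnEntropy (ptraceA ρ)

open Finset

theorem eta_eq_negMulLog : eta = Real.negMulLog := by
  funext x
  rw [eta, Real.negMulLog_eq_neg]

theorem eta_le_tangent {x y : ℝ} (hx : 0 < x) (hy : 0 ≤ y) :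
    eta y ≤ eta x + (-Real.log x - 1) * (y - x) := by
  have hsplit := Real.negMulLog_mul x (y / x)
  rw [mul_div_cancel₀ y hx.ne'] at hsplit
  have hfirst : y / x * Real.negMulLog x = -(y * Real.log x) := by
    rw [Real.negMulLog]; field_simp
  have hsecond : x * Real.negMulLog (y / x) ≤ x - y := by
    have := mul_le_mul_of_nonneg_left
      (Real.negMulLog_le_one_sub_self (div_nonneg hy hx.le)) hx.le
    rwa [mul_one_sub, mul_div_cancel₀ y hx.ne'] at this
  have hx' : Real.negMulLog x = -(x * Real.log x) := by rw [Real.negMulLog, neg_mul]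
  rw [eta_eq_negMulLog, hsplit, hfirst, hx']
  linarith

theorem sum_mul_nonpos_of_monotoneOn {n : ℕ} {g D : ℕ → ℝ} (hg : MonotoneOn g (Set.Iio n))
    (hD : ∀ k ≤ n, 0 ≤ ∑ j ∈ range k, D j) (hDn : ∑ j ∈ range n, D j = 0) :
    ∑ j ∈ range n, g j * D j ≤ 0 := by
  simp_rw [← smul_eq_mul]
  rw [sum_range_by_parts, hDn, smul_zero, zero_sub, neg_nonpos]
  refine sum_nonneg fun i hi => smul_nonneg ?_ (hD _ (by grind))
  have := mem_range.mp hi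
  exact sub_nonneg.mpr (hg (by simp; omega) (by simp; omega) (by omega))

theorem sum_range_eta_le_of_antitoneOn_of_pos {n : ℕ} {x y : ℕ → ℝ}
    (hx : AntitoneOn x (Set.Iio n)) (hxpos : ∀ j < n, 0 < x j) (hy : ∀ j < n, 0 ≤ y j)
    (hpartial : ∀ k ≤ n, ∑ j ∈ range k, x j ≤ ∑ j ∈ range k, y j)
    (htotal : ∑ j ∈ range n, x j = ∑ j ∈ range n, y j) :
    ∑ j ∈ range n, eta (y j) ≤ ∑ j ∈ range n, eta (x j) := by
  have htangent : ∑ j ∈ range n, eta (y j) ≤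
      ∑ j ∈ range n, (eta (x j) + (-Real.log (x j) - 1) * (y j - x j)) :=
    sum_le_sum fun j hj => eta_le_tangent (hxpos j (mem_range.mp hj)) (hy j (mem_range.mp hj))
  have habel : ∑ j ∈ range n, (-Real.log (x j) - 1) * (y j - x j) ≤ 0 := by
    apply sum_mul_nonpos_of_monotoneOn
    · intro i hi j hj hij
      linarith [Real.log_le_log (hxpos j hj) (hx hi hj hij)]
    · intro k hk
      linarith [sum_sub_distrib y x (s := range k), hpartial k hk]
    · rw [sum_sub_distrib, htotal, sub_self]
  rw [sum_add_distrib] at htangent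
  linarith

theorem sum_range_eta_le_of_antitoneOn {n : ℕ} {x y : ℕ → ℝ}
    (hx : AntitoneOn x (Set.Iio n)) (hy : ∀ j < n, 0 ≤ y j)
    (hpartial : ∀ k ≤ n, ∑ j ∈ range k, x j ≤ ∑ j ∈ range k, y j)
    (htotal : ∑ j ∈ range n, x j = ∑ j ∈ range n, y j) :
    ∑ j ∈ range n, eta (y j) ≤ ∑ j ∈ range n, eta (x j) := by
  induction n with
  | zero => simp
  | succ n ih =>
    rcases le_or_gt (x n) 0 with hlast | hlast
    · have hyx : y n ≤ x n := by
        rw [sum_range_succ, sum_range_succ] at htotal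
        linarith [hpartial n n.le_succ]
      have hy0 : y n = 0 := le_antisymm (hyx.trans hlast) (hy n n.lt_succ_self)
      have hx0 : x n = 0 := le_antisymm hlast (hy0 ▸ hyx)
      rw [sum_range_succ, sum_range_succ, hy0, hx0, add_zero, add_zero] at htotal
      rw [sum_range_succ, sum_range_succ, hy0, hx0]
      refine add_le_add_left (ih (hx.mono fun j hj => ?_) (fun j hj => hy j (by omega))
        (fun k hk => hpartial k (by omega)) htotal) _
      simp only [Set.mem_Iio] at hj ⊢
      omega
    · refine sum_range_eta_le_of_antitoneOn_of_pos hx (fun j hj => hlast.trans_le ?_) hy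
        hpartial htotal
      exact hx (Set.mem_Iio.mpr hj) (Set.mem_Iio.mpr n.lt_succ_self) (by omega)

section Sorting

variable {n : ℕ}

def sortDownPerm (x : Fin n → ℝ) : Equiv.Perm (Fin n) := Fin.revPerm.trans (Tuple.sort x)

theorem sortDown_eq_comp (x : Fin n → ℝ) : sortDown x = x ∘ sortDownPerm x := rfl

theorem sortDown_antitone (x : Fin n → ℝ) : Antitone (sortDown x) := fun _ _ hst =>
  Tuple.monotone_sort x (Fin.rev_le_rev.mpr hst)

theorem sum_comp_sortDown {M : Type*} [AddCommMonoid M] (f : ℝ → M) (x : Fin n → ℝ) :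
    ∑ i, f (sortDown x i) = ∑ i, f (x i) :=
  Equiv.sum_comp (sortDownPerm x) (f ∘ x)

theorem shannonH_sortDown (x : Fin n → ℝ) : shannonH (sortDown x) = shannonH x :=
  sum_comp_sortDown eta x

theorem sortDown_neg (x : Fin n → ℝ) (i : Fin n) :
    sortDown (-x) i = -(x ∘ Tuple.sort x) i := by
  have hmono : Monotone (-x ∘ ⇑(sortDownPerm x)) := fun s t hst =>
    neg_le_neg (Tuple.monotone_sort x (Fin.rev_le_rev.mpr hst))
  rw [sortDown, ← Tuple.comp_sort_eq_comp_iff_monotone.mpr hmono]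
  simp [sortDownPerm]

theorem sum_range_extend_val {k : ℕ} (hk : k ≤ n) (f : Fin n → ℝ) :
    ∑ j ∈ range k, Function.extend Fin.val f 0 j =
      ∑ j ∈ univ.filter (fun j : Fin n => (j : ℕ) < k), f j := by
  symm
  refine sum_bij (fun j _ => (j : ℕ)) (by simp) (fun _ _ _ _ h => Fin.val_injective h)
    (fun m hm => ⟨⟨m, by simp at hm; omega⟩, by simpa using hm, rfl⟩)
    (fun j _ => (Fin.val_injective.extend_apply f 0 j).symm)

theorem sum_max_sub_sortDown (x : Fin n → ℝ) (k : Fin n) :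
    ∑ i, max (x i - sortDown x k) 0 = ∑ j ∈ Iic k, (sortDown x j - sortDown x k) := by
  have htail : ∑ j ∈ univ.filter (¬· ≤ k), max (sortDown x j - sortDown x k) 0 = 0 :=
    sum_eq_zero fun j hj => max_eq_right (sub_nonpos.mpr
      (sortDown_antitone x (not_le.mp (mem_filter.mp hj).2).le))
  rw [← sum_comp_sortDown (fun t => max (t - sortDown x k) 0), ← sum_filter_add_sum_filter_not
    univ (· ≤ k), filter_ge_eq_Iic, htail, add_zero]
  exact sum_congr rfl fun j hj =>
    max_eq_left (sub_nonneg.mpr (sortDown_antitone x (mem_Iic.mp hj)))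

theorem filter_val_lt_card_filter_val_lt (k : ℕ) :
    univ.filter (fun j : Fin n => (j : ℕ) < #(univ.filter fun j : Fin n => (j : ℕ) < k)) =
      univ.filter fun j : Fin n => (j : ℕ) < k := by
  ext j
  simp only [Fin.card_filter_val_lt, mem_filter, mem_univ, true_and]
  have := j.isLt
  omega

end Sorting

theorem shannonH_le_of_majorizes {n : ℕ} {x y : Fin n → ℝ} (hxy : Majorizes y x)
    (hy : ∀ i, 0 ≤ y i) : shannonH y ≤ shannonH x := by
  obtain ⟨hpartial, htotal⟩ := hxy
  set X := Function.extend Fin.val (sortDown x) 0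
  set Y := Function.extend Fin.val (sortDown y) 0
  have hX (i : Fin n) : X i = sortDown x i := Fin.val_injective.extend_apply _ _ i
  have hY (i : Fin n) : Y i = sortDown y i := Fin.val_injective.extend_apply _ _ i
  rw [← shannonH_sortDown x, ← shannonH_sortDown y, shannonH, shannonH]
  simp only [← hX, ← hY, Fin.sum_univ_eq_sum_range (fun j => eta (X j)),
    Fin.sum_univ_eq_sum_range (fun j => eta (Y j))]
  refine sum_range_eta_le_of_antitoneOn ?_ ?_ ?_ ?_
  · intro i hi j hj hij
    have := sortDown_antitone x (show (⟨i, hi⟩ : Fin n) ≤ ⟨j, hj⟩ from hij)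
    rwa [← hX, ← hX] at this
  · intro j hj
    rw [show j = ((⟨j, hj⟩ : Fin n) : ℕ) from rfl, hY, sortDown_eq_comp]
    exact hy _
  · intro k hk
    rw [sum_range_extend_val hk, sum_range_extend_val hk]
    exact hpartial k
  · rw [← Fin.sum_univ_eq_sum_range, ← Fin.sum_univ_eq_sum_range]
    simp only [hX, hY]
    exact (sum_comp_sortDown id x).trans (htotal.trans (sum_comp_sortDown id y).symm)

theorem exists_ne_zero_forall_dotProduct_eq_zero {K ι : Type*} [Field K] [Fintype ι] {d : ℕ}
    (w : ι → Fin d → K) (hcard : Fintype.card ι < d) : ∃ x ≠ 0, ∀ s, w s ⬝ᵥ x = 0 := by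
  have hker : LinearMap.ker (Matrix.of w).mulVecLin ≠ ⊥ :=
    LinearMap.ker_ne_bot_of_finrank_lt (by simpa using hcard)
  obtain ⟨x, hx, hx0⟩ := Submodule.exists_mem_ne_zero_of_ne_bot hker
  exact ⟨x, hx0, fun s => congrFun (LinearMap.mem_ker.mp hx) s⟩

section Eigensystem

variable {𝕜 : Type*} [RCLike 𝕜] {d : ℕ}

def quadForm (A : Matrix (Fin d) (Fin d) 𝕜) (x : Fin d → 𝕜) : ℝ :=
  RCLike.re (star x ⬝ᵥ (A *ᵥ x))

theorem quadForm_add (A B : Matrix (Fin d) (Fin d) 𝕜) (x : Fin d → 𝕜) :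
    quadForm (A + B) x = quadForm A x + quadForm B x := by
  simp [quadForm, add_mulVec, dotProduct_add]

theorem quadForm_sub (A B : Matrix (Fin d) (Fin d) 𝕜) (x : Fin d → 𝕜) :
    quadForm (A - B) x = quadForm A x - quadForm B x := by
  simp [quadForm, sub_mulVec, dotProduct_sub]

theorem quadForm_smul_one (c : ℝ) (x : Fin d → 𝕜) :
    quadForm ((c : 𝕜) • (1 : Matrix (Fin d) (Fin d) 𝕜)) x = c * quadForm 1 x := by
  simp [quadForm, smul_mulVec, dotProduct_smul, RCLike.smul_re]

theorem quadForm_one_pos {x : Fin d → 𝕜} (hx : x ≠ 0) : 0 < quadForm 1 x :=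
  Matrix.PosDef.one.re_dotProduct_pos hx

structure IsEigensystem (A : Matrix (Fin d) (Fin d) 𝕜) (u : Fin d → Fin d → 𝕜)
    (a : Fin d → ℝ) : Prop where
  dotProduct_eq : ∀ i j, star (u i) ⬝ᵥ u j = if i = j then 1 else 0
  eq_sum : ∀ x, x = ∑ i, (star (u i) ⬝ᵥ x) • u i
  mulVec_eq : ∀ i, A *ᵥ u i = (a i : 𝕜) • u i

namespace IsEigensystem

variable {A B : Matrix (Fin d) (Fin d) 𝕜} {u : Fin d → Fin d → 𝕜} {a b : Fin d → ℝ}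

theorem one (h : IsEigensystem A u a) : IsEigensystem 1 u 1 :=
  ⟨h.dotProduct_eq, h.eq_sum, fun i => by simp⟩

theorem neg (h : IsEigensystem A u a) : IsEigensystem (-A) u (-a) :=
  ⟨h.dotProduct_eq, h.eq_sum, fun i => by simp [neg_mulVec, h.mulVec_eq i, neg_smul]⟩

theorem quadForm_eq (h : IsEigensystem A u a) (x : Fin d → 𝕜) :
    quadForm A x = ∑ i, a i * ‖star (u i) ⬝ᵥ x‖ ^ 2 := by
  have hAx : A *ᵥ x = ∑ i, ((a i : 𝕜) * (star (u i) ⬝ᵥ x)) • u i := by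
    conv_lhs => rw [h.eq_sum x]
    simp only [mulVec_sum, mulVec_smul, h.mulVec_eq, smul_smul, mul_comm]
  rw [quadForm, hAx, dotProduct_sum, map_sum]
  refine sum_congr rfl fun i _ => ?_
  rw [dotProduct_smul, smul_eq_mul, star_dotProduct x (u i), mul_assoc, RCLike.star_def,
    RCLike.mul_conj, ← RCLike.ofReal_pow, RCLike.re_ofReal_mul, RCLike.ofReal_re]

theorem sub_smul_one (h : IsEigensystem A u a) (c : ℝ) :
    IsEigensystem (A - (c : 𝕜) • 1) u (fun i => a i - c) :=
  ⟨h.dotProduct_eq, h.eq_sum, fun i => by simp [sub_mulVec, smul_mulVec, h.mulVec_eq i, sub_smul]⟩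

theorem quadForm_nonneg (h : IsEigensystem A u a) (ha : ∀ i, 0 ≤ a i) (x : Fin d → 𝕜) :
    0 ≤ quadForm A x := by
  rw [h.quadForm_eq]
  exact sum_nonneg fun i _ => mul_nonneg (ha i) (by positivity)

theorem quadForm_le (hA : IsEigensystem A u a) (hB : IsEigensystem B u b)
    (hab : ∀ i, a i ≤ b i) (x : Fin d → 𝕜) : quadForm A x ≤ quadForm B x := by
  rw [hA.quadForm_eq, hB.quadForm_eq]
  exact sum_le_sum fun i _ => mul_le_mul_of_nonneg_right (hab i) (by positivity)

theorem sortDown_mul_quadForm_one_le (h : IsEigensystem A u a) {i : Fin d} {x : Fin d → 𝕜}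
    (hx : ∀ s, i < s → star (u (sortDownPerm a s)) ⬝ᵥ x = 0) :
    sortDown a i * quadForm 1 x ≤ quadForm A x := by
  set c : Fin d → ℝ := fun j => ‖star (u j) ⬝ᵥ x‖ ^ 2
  have hc : ∀ s, i < s → c (sortDownPerm a s) = 0 := fun s hs => by simp [c, hx s hs]
  simp only [h.quadForm_eq, h.one.quadForm_eq, Pi.one_apply, one_mul]
  calc sortDown a i * ∑ j, c j = ∑ s, sortDown a i * c (sortDownPerm a s) := by
        rw [mul_sum]
        exact (Equiv.sum_comp (sortDownPerm a) fun j => sortDown a i * c j).symm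
    _ ≤ ∑ s, sortDown a s * c (sortDownPerm a s) := by
        refine sum_le_sum fun s _ => ?_
        rcases le_or_gt s i with hs | hs
        · exact mul_le_mul_of_nonneg_right (sortDown_antitone a hs) (by positivity)
        · simp [hc s hs]
    _ = ∑ j, a j * c j := Equiv.sum_comp (sortDownPerm a) fun j => a j * c j

theorem quadForm_le_sortDown_mul_quadForm_one (h : IsEigensystem A u a) {i : Fin d}
    {x : Fin d → 𝕜} (hx : ∀ s < i, star (u (sortDownPerm a s)) ⬝ᵥ x = 0) :
    quadForm A x ≤ sortDown a i * quadForm 1 x := by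
  set c : Fin d → ℝ := fun j => ‖star (u j) ⬝ᵥ x‖ ^ 2
  have hc : ∀ s < i, c (sortDownPerm a s) = 0 := fun s hs => by simp [c, hx s hs]
  simp only [h.quadForm_eq, h.one.quadForm_eq, Pi.one_apply, one_mul]
  calc ∑ j, a j * c j = ∑ s, sortDown a s * c (sortDownPerm a s) :=
        (Equiv.sum_comp (sortDownPerm a) fun j => a j * c j).symm
    _ ≤ ∑ s, sortDown a i * c (sortDownPerm a s) := by
        refine sum_le_sum fun s _ => ?_
        rcases lt_or_ge s i with hs | hs
        · simp [hc s hs]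
        · exact mul_le_mul_of_nonneg_right (sortDown_antitone a hs) (by positivity)
    _ = sortDown a i * ∑ j, c j := by
        rw [mul_sum]
        exact Equiv.sum_comp (sortDownPerm a) fun j => sortDown a i * c j

end IsEigensystem

theorem IsEigensystem.sortDown_add_le {A B : Matrix (Fin d) (Fin d) 𝕜}
    {u v : Fin d → Fin d → 𝕜} {a b : Fin d → ℝ} (hA : IsEigensystem A u a)
    (hB : IsEigensystem B v b) {c : ℝ} (h : ∀ x, quadForm A x + c * quadForm 1 x ≤ quadForm B x)
    (i : Fin d) : sortDown a i + c ≤ sortDown b i := by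
  -- a test vector spanned by the top `i + 1` eigenvectors of `A` and orthogonal to the top `i`
  -- eigenvectors of `B`: there are only `d - 1` linear conditions
  let w : {s : Fin d // s ≠ i} → Fin d → 𝕜 := fun s =>
    if s.1 < i then star (v (sortDownPerm b s)) else star (u (sortDownPerm a s))
  have hcard : Fintype.card {s : Fin d // s ≠ i} < d := by
    rw [Fintype.card_subtype_compl, Fintype.card_fin, Fintype.card_unique]
    exact Nat.sub_lt i.pos one_pos
  obtain ⟨x, hx0, hx⟩ := exists_ne_zero_forall_dotProduct_eq_zero w hcard
  have hlow := hA.sortDown_mul_quadForm_one_le (i := i) (x := x) fun s hs => by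
    simpa [w, not_lt.mpr hs.le] using hx ⟨s, hs.ne'⟩
  have hup := hB.quadForm_le_sortDown_mul_quadForm_one (i := i) (x := x) fun s hs => by
    simpa [w, hs] using hx ⟨s, hs.ne⟩
  refine le_of_mul_le_mul_right ?_ (quadForm_one_pos hx0)
  linarith [h x]

namespace Matrix.IsHermitian

variable {X : Matrix (Fin d) (Fin d) 𝕜}

theorem isEigensystem (hX : X.IsHermitian) :
    IsEigensystem X (fun i => ⇑(hX.eigenvectorBasis i)) hX.eigenvalues where
  dotProduct_eq i j := by
    simpa [EuclideanSpace.inner_eq_star_dotProduct, dotProduct_comm] using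
      orthonormal_iff_ite.mp hX.eigenvectorBasis.orthonormal i j
  eq_sum x := by
    simpa [EuclideanSpace.inner_eq_star_dotProduct, dotProduct_comm] using
      (congrArg WithLp.ofLp (hX.eigenvectorBasis.sum_repr' (WithLp.toLp 2 x))).symm
  mulVec_eq i := by
    rw [hX.mulVec_eigenvectorBasis, RCLike.real_smul_eq_coe_smul (K := 𝕜)]

theorem isEigensystem_cfc (hX : X.IsHermitian) (f : ℝ → ℝ) :
    IsEigensystem (hX.cfc f) (fun i => ⇑(hX.eigenvectorBasis i)) (f ∘ hX.eigenvalues) where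
  dotProduct_eq := hX.isEigensystem.dotProduct_eq
  eq_sum := hX.isEigensystem.eq_sum
  mulVec_eq i := by
    rw [Matrix.IsHermitian.cfc, Unitary.conjStarAlgAut_apply, ← mulVec_mulVec, ← mulVec_mulVec,
      star_eigenvectorUnitary_mulVec, diagonal_mulVec_single, mul_one,
      ← mul_one ((RCLike.ofReal ∘ f ∘ hX.eigenvalues) i), ← smul_eq_mul, Pi.single_smul,
      mulVec_smul, eigenvectorUnitary_mulVec]
    rfl

theorem isHermitian_cfc (hX : X.IsHermitian) (f : ℝ → ℝ) : (hX.cfc f).IsHermitian := by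
  rw [← hX.cfc_eq]
  exact cfc_predicate f X

theorem trace_cfc (hX : X.IsHermitian) (f : ℝ → ℝ) :
    (hX.cfc f).trace = ∑ i, (f (hX.eigenvalues i) : 𝕜) := by
  rw [Matrix.IsHermitian.cfc, Unitary.conjStarAlgAut_apply, trace_mul_cycle,
    Unitary.coe_star_mul_self, one_mul, trace_diagonal]
  rfl

theorem re_trace_eq_sum_eigenvalues (hX : X.IsHermitian) :
    RCLike.re X.trace = ∑ i, hX.eigenvalues i := by
  simp [hX.trace_eq_sum_eigenvalues]

theorem re_trace_eq_sum_sortDown (hX : X.IsHermitian) :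
    RCLike.re X.trace = ∑ i, sortDown hX.eigenvalues i :=
  hX.re_trace_eq_sum_eigenvalues.trans (sum_comp_sortDown id hX.eigenvalues).symm

theorem sortDown_eigenvalues_add_le {Y : Matrix (Fin d) (Fin d) 𝕜} (hX : X.IsHermitian)
    (hY : Y.IsHermitian) {c : ℝ} (h : ∀ x, quadForm X x + c * quadForm 1 x ≤ quadForm Y x)
    (i : Fin d) : sortDown hX.eigenvalues i + c ≤ sortDown hY.eigenvalues i :=
  hX.isEigensystem.sortDown_add_le hY.isEigensystem h i

end Matrix.IsHermitian

theorem IsEigensystem.sortDown_eq {X : Matrix (Fin d) (Fin d) 𝕜} {u : Fin d → Fin d → 𝕜}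
    {a : Fin d → ℝ} (h : IsEigensystem X u a) (hX : X.IsHermitian) :
    sortDown a = sortDown hX.eigenvalues := by
  funext i
  have hle := h.sortDown_add_le hX.isEigensystem (c := 0) (by simp) i
  have hge := hX.isEigensystem.sortDown_add_le h (c := 0) (by simp) i
  linarith

theorem Matrix.IsHermitian.sortDown_eigenvalues_neg {X : Matrix (Fin d) (Fin d) 𝕜}
    (hX : X.IsHermitian) (hnX : (-X).IsHermitian) (i : Fin d) :
    sortDown hnX.eigenvalues i = -(hX.eigenvalues ∘ Tuple.sort hX.eigenvalues) i := by
  rw [← hX.isEigensystem.neg.sortDown_eq hnX, sortDown_neg]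

/-- **Lidskii's inequality**. -/
theorem sum_sortDown_eigenvalues_add_sub_le {A B : Matrix (Fin d) (Fin d) 𝕜}
    (hA : A.IsHermitian) (hB : B.IsHermitian) (hAB : (A + B).IsHermitian) (T : Finset (Fin d)) :
    ∑ i ∈ T, (sortDown hAB.eigenvalues i - sortDown hA.eigenvalues i) ≤
      ∑ j ∈ univ.filter (fun j : Fin d => (j : ℕ) < #T), sortDown hB.eigenvalues j := by
  rcases T.eq_empty_or_nonempty with rfl | hT
  · simp
  have hTd : #T ≤ d := by simpa using card_le_univ T
  set k : Fin d := ⟨#T - 1, by have := hT.card_pos; omega⟩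
  have hk : univ.filter (fun j : Fin d => (j : ℕ) < #T) = Iic k := by
    ext j
    simp only [mem_filter, mem_univ, true_and, mem_Iic, Fin.le_def, k]
    have := hT.card_pos
    omega
  set c := sortDown hB.eigenvalues k
  -- `P` is the positive part of `B - c`; its trace sums the top `#T` eigenvalues of `B - c`
  set P := hB.cfc fun t => max (t - c) 0
  have hP := hB.isEigensystem_cfc fun t => max (t - c) 0
  have hAP : (A + P).IsHermitian := hA.add (hB.isHermitian_cfc _)
  have hshift (i : Fin d) : sortDown hAB.eigenvalues i - c ≤ sortDown hAP.eigenvalues i := by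
    suffices ∀ x, quadForm (A + B) x + -c * quadForm 1 x ≤ quadForm (A + P) x by
      linarith [hAB.sortDown_eigenvalues_add_le hAP this i]
    intro x
    have hle := (hB.isEigensystem.sub_smul_one c).quadForm_le hP (fun i => le_max_left _ _) x
    rw [quadForm_sub, quadForm_smul_one] at hle
    rw [quadForm_add, quadForm_add]
    linarith
  have hgrow (i : Fin d) : sortDown hA.eigenvalues i ≤ sortDown hAP.eigenvalues i := by
    suffices ∀ x, quadForm A x + 0 * quadForm 1 x ≤ quadForm (A + P) x by
      linarith [hA.sortDown_eigenvalues_add_le hAP this i]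
    intro x
    rw [quadForm_add]
    linarith [hP.quadForm_nonneg (fun i => le_max_right _ _) x]
  calc ∑ i ∈ T, (sortDown hAB.eigenvalues i - sortDown hA.eigenvalues i)
      ≤ ∑ i ∈ T, ((sortDown hAP.eigenvalues i - sortDown hA.eigenvalues i) + c) :=
        sum_le_sum fun i _ => by linarith [hshift i]
    _ = ∑ i ∈ T, (sortDown hAP.eigenvalues i - sortDown hA.eigenvalues i) + #T * c := by
        rw [sum_add_distrib, sum_const, nsmul_eq_mul]
    _ ≤ ∑ i, (sortDown hAP.eigenvalues i - sortDown hA.eigenvalues i) + #T * c := by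
        refine add_le_add_left (sum_le_sum_of_subset_of_nonneg (subset_univ T) ?_) _
        exact fun i _ _ => sub_nonneg.mpr (hgrow i)
    _ = RCLike.re P.trace + #T * c := by
        rw [sum_sub_distrib, ← hAP.re_trace_eq_sum_sortDown, ← hA.re_trace_eq_sum_sortDown,
          trace_add, map_add, add_sub_cancel_left]
    _ = ∑ j ∈ Iic k, (sortDown hB.eigenvalues j - c) + #T * c := by
        rw [hB.trace_cfc, map_sum]
        simp only [RCLike.ofReal_re]
        rw [sum_max_sub_sortDown]
    _ = ∑ j ∈ univ.filter (fun j : Fin d => (j : ℕ) < #T), sortDown hB.eigenvalues j := by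
        rw [hk, sum_sub_distrib, sum_const, Fin.card_Iic, nsmul_eq_mul]
        have : (k : ℕ) + 1 = #T := by have := hT.card_pos; simp only [k]; omega
        rw [← this]
        push_cast
        ring

end Eigensystem

theorem majorizes_eigenvalues_add {d : ℕ} {ω Δ : Matrix (Fin d) (Fin d) ℂ} (hω : ω.IsHermitian)
    (hΔ : Δ.IsHermitian) (hM : (ω + Δ).IsHermitian) :
    Majorizes hM.eigenvalues (fun j => eigDown Δ hΔ j + eigUp ω hω j) := by
  set v := fun j => eigDown Δ hΔ j + eigUp ω hω j
  have hΔ' : (-ω + (ω + Δ)).IsHermitian := by rwa [neg_add_cancel_left]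
  have hv (i : Fin d) : sortDown hΔ'.eigenvalues i - sortDown hω.neg.eigenvalues i = v i := by
    have hcongr : ∀ (D : Matrix (Fin d) (Fin d) ℂ) (hD : D.IsHermitian), D = Δ →
        sortDown hD.eigenvalues = sortDown hΔ.eigenvalues := by
      rintro D hD rfl
      rfl
    rw [hcongr _ hΔ' (neg_add_cancel_left ω Δ), hω.sortDown_eigenvalues_neg hω.neg, sub_neg_eq_add]
    rfl
  refine ⟨fun k => ?_, ?_⟩
  · set F := univ.filter fun j : Fin d => (j : ℕ) < k
    have hF : ∑ j ∈ F, sortDown v j = ∑ i ∈ F.map (sortDownPerm v).toEmbedding, v i := by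
      rw [sum_map]
      rfl
    calc ∑ j ∈ F, sortDown v j
        = ∑ i ∈ F.map (sortDownPerm v).toEmbedding,
            (sortDown hΔ'.eigenvalues i - sortDown hω.neg.eigenvalues i) :=
          hF.trans (sum_congr rfl fun i _ => (hv i).symm)
      _ ≤ ∑ j ∈ univ.filter (fun j : Fin d => (j : ℕ) < #(F.map (sortDownPerm v).toEmbedding)),
            sortDown hM.eigenvalues j :=
          sum_sortDown_eigenvalues_add_sub_le hω.neg hM hΔ' _
      _ = ∑ j ∈ F, sortDown hM.eigenvalues j := by
          rw [card_map, filter_val_lt_card_filter_val_lt]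
  · have hup : ∑ i, eigUp ω hω i = ∑ i, hω.eigenvalues i :=
      Equiv.sum_comp (Tuple.sort hω.eigenvalues) hω.eigenvalues
    have hdown : ∑ i, eigDown Δ hΔ i = ∑ i, sortDown hΔ.eigenvalues i := rfl
    rw [sum_add_distrib, hup, hdown, ← hΔ.re_trace_eq_sum_sortDown,
      ← hω.re_trace_eq_sum_eigenvalues, ← hM.re_trace_eq_sum_eigenvalues, trace_add, map_add,
      add_comm]

/-- if `ω + Δ ≥ 0` then `S(ω + Δ) ≤ H(λ^↓(Δ) + λ^↑(ω))`. -/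
theorem vnEntropy_le_shannonH {d : ℕ} (ω Δ : Matrix (Fin d) (Fin d) ℂ)
    (hω : ω.IsHermitian) (hΔ : Δ.IsHermitian) (hpos : (ω + Δ).PosSemidef) :
    vnEntropy (ω + Δ) ≤ shannonH (fun j => eigDown Δ hΔ j + eigUp ω hω j) := by
  have hM : (ω + Δ).IsHermitian := hpos.isHermitian
  have hS : vnEntropy (ω + Δ) = shannonH hM.eigenvalues := by
    rw [vnEntropy, dif_pos hM]
    rfl
  rw [hS]
  exact shannonH_le_of_majorizes (majorizes_eigenvalues_add hω hΔ hM) hpos.eigenvalues_nonneg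
end
end

section
/- Lidskii's theorem: for Hermitian d×d matrices A and B, the vector λ^↓(A) + λ^↑(B) is majorized by the vector of eigenvalues of A + B. -/
open Matrix BigOperators
open scoped ComplexOrder

noncomputable section

open Module Submodule RCLike
open scoped InnerProductSpace MatrixOrder

/-!
Li–Mathias argument. Fix `J` with `#J = k`, put `S = A + B`, let `c` be the `k`-th largest
eigenvalue of `S` and `P = (S - c)₊`, computed by functional calculus. Then `0 ≤ P`, `S ≤ P + c`
and `tr P = Σ_{j<k} λ↓_j(S) - k c`. Weyl monotonicity (from the Courant–Fischer bounds) applied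
to `A ≤ (P - B) + c` and to `-B ≤ P - B` gives `λ↓_i(A) ≤ λ↓_i(P - B) + c` and
`0 ≤ λ↓_i(P - B) + λ↑_i(B)`. Summing the first over `J` and using the second to pass to the
sum over all indices, which is `tr P`, yields `Σ_{i∈J} (λ↓_i(A) + λ↑_i(B)) ≤ Σ_{j<k} λ↓_j(S)`.
Taking for `J` the positions of the `k` largest entries gives the majorization.
-/

section Rayleigh

variable {𝕜 E ι : Type*} [RCLike 𝕜] [NormedAddCommGroup E] [InnerProductSpace 𝕜 E] [Fintype ι]
  {T : E →ₗ[𝕜] E} {b : OrthonormalBasis ι 𝕜 E} {μ : ι → ℝ}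

theorem re_inner_map_self_eq_sum (hb : ∀ j, T (b j) = (μ j : 𝕜) • b j) (x : E) :
    re ⟪x, T x⟫_𝕜 = ∑ j, μ j * ‖⟪b j, x⟫_𝕜‖ ^ 2 := by
  have hTx : T x = ∑ j, ((μ j : 𝕜) * ⟪b j, x⟫_𝕜) • b j := by
    conv_lhs => rw [← b.sum_repr' x]
    simp only [map_sum, map_smul, hb, smul_smul, mul_comm]
  rw [hTx, inner_sum, map_sum]
  refine Finset.sum_congr rfl fun j _ => ?_
  rw [inner_smul_right, ← inner_conj_symm, mul_assoc, RCLike.conj_mul, norm_conj, ← ofReal_pow,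
    ← ofReal_mul, ofReal_re]

theorem OrthonormalBasis.inner_eq_zero_of_mem_span {s : Set ι} {x : E}
    (hx : x ∈ span 𝕜 (b '' s)) {j : ι} (hj : j ∉ s) : ⟪b j, x⟫_𝕜 = 0 := by
  induction hx using Submodule.span_induction with
  | mem y hy =>
    obtain ⟨i, hi, rfl⟩ := hy
    exact b.orthonormal.2 (ne_of_mem_of_not_mem hi hj).symm
  | zero => exact inner_zero_right _
  | add y z _ _ hy hz => rw [inner_add_right, hy, hz, add_zero]
  | smul a y _ hy => rw [inner_smul_right, hy, mul_zero]

theorem re_inner_map_self_le_of_mem_span (hb : ∀ j, T (b j) = (μ j : 𝕜) • b j) {s : Set ι}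
    {c : ℝ} (hc : ∀ j ∈ s, μ j ≤ c) {x : E} (hx : x ∈ span 𝕜 (b '' s)) :
    re ⟪x, T x⟫_𝕜 ≤ c * ‖x‖ ^ 2 := by
  rw [re_inner_map_self_eq_sum hb, ← b.sum_sq_norm_inner_right, Finset.mul_sum]
  refine Finset.sum_le_sum fun j _ => ?_
  by_cases hj : j ∈ s
  · exact mul_le_mul_of_nonneg_right (hc j hj) (by positivity)
  · simp [b.inner_eq_zero_of_mem_span hx hj]

theorem le_re_inner_map_self_of_mem_span (hb : ∀ j, T (b j) = (μ j : 𝕜) • b j) {s : Set ι}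
    {c : ℝ} (hc : ∀ j ∈ s, c ≤ μ j) {x : E} (hx : x ∈ span 𝕜 (b '' s)) :
    c * ‖x‖ ^ 2 ≤ re ⟪x, T x⟫_𝕜 := by
  rw [re_inner_map_self_eq_sum hb, ← b.sum_sq_norm_inner_right, Finset.mul_sum]
  refine Finset.sum_le_sum fun j _ => ?_
  by_cases hj : j ∈ s
  · exact mul_le_mul_of_nonneg_right (hc j hj) (by positivity)
  · simp [b.inner_eq_zero_of_mem_span hx hj]

theorem OrthonormalBasis.finrank_span_image (b : OrthonormalBasis ι 𝕜 E) (s : Finset ι) :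
    finrank 𝕜 (span 𝕜 (b '' s)) = s.card := by
  rw [Set.image_eq_range, finrank_span_eq_card (b := fun i : (s : Set ι) => b i)
    (b.orthonormal.linearIndependent.comp _ Subtype.val_injective)]
  simp

theorem Submodule.exists_mem_inf_ne_zero_of_lt_finrank_add [FiniteDimensional 𝕜 E]
    {V W : Submodule 𝕜 E} (h : finrank 𝕜 E < finrank 𝕜 V + finrank 𝕜 W) :
    ∃ x ∈ V ⊓ W, x ≠ 0 := by
  by_contra! hVW
  exact h.not_ge (finrank_add_finrank_le_of_disjoint (disjoint_iff_inf_le.mpr hVW))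

end Rayleigh

namespace Matrix

variable {𝕜 n : Type*} [RCLike 𝕜] [Fintype n] [DecidableEq n]

theorem re_inner_toEuclideanLin_le_of_le {M N : Matrix n n 𝕜} (h : M ≤ N)
    (x : EuclideanSpace 𝕜 n) :
    re ⟪x, M.toEuclideanLin x⟫_𝕜 ≤ re ⟪x, N.toEuclideanLin x⟫_𝕜 := by
  have := (isPositive_toEuclideanLin_iff.mpr (le_iff.mp h)).re_inner_nonneg_right x
  rwa [map_sub, LinearMap.sub_apply, inner_sub_right, map_sub, sub_nonneg] at this

theorem re_inner_toEuclideanLin_add_smul_one (M : Matrix n n 𝕜) (c : ℝ)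
    (x : EuclideanSpace 𝕜 n) :
    re ⟪x, (M + c • 1).toEuclideanLin x⟫_𝕜 = re ⟪x, M.toEuclideanLin x⟫_𝕜 + c * ‖x‖ ^ 2 := by
  have h1 : (c • 1 : Matrix n n 𝕜).toEuclideanLin x = c • x := by
    simp [toLpLin_apply, smul_mulVec]
  rw [map_add, LinearMap.add_apply, h1, inner_add_right, map_add, real_smul_eq_coe_smul (K := 𝕜),
    inner_smul_right, re_ofReal_mul, inner_self_eq_norm_sq]

theorem IsHermitian.re_trace_cfc {A : Matrix n n 𝕜} (hA : A.IsHermitian) (f : ℝ → ℝ) :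
    re (cfc f A).trace = ∑ i, f (hA.eigenvalues i) := by
  rw [cfc_eq hA, IsHermitian.cfc, Unitary.conjStarAlgAut_apply, trace_mul_cycle,
    Unitary.coe_star_mul_self, one_mul, trace_diagonal, map_sum]
  simp

theorem le_cfc_max_sub_add_smul_one {A : Matrix n n 𝕜} (hA : A.IsHermitian) (c : ℝ) :
    A ≤ cfc (fun x => max (x - c) 0) A + c • 1 := by
  have hA' : IsSelfAdjoint A := hA
  calc A = cfc (fun x => x) A := (cfc_id' ℝ A).symm
    _ ≤ cfc (fun x => max (x - c) 0 + c) A :=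
      cfc_mono fun x _ => by linarith [le_max_left (x - c) 0]
    _ = cfc (fun x => max (x - c) 0) A + c • 1 := by
      rw [cfc_add_const c _ A, Algebra.algebraMap_eq_smul_one]

end Matrix

namespace Matrix.IsHermitian

variable {d : ℕ} {M : Matrix (Fin d) (Fin d) ℂ}

def sortedEigenbasis (hM : M.IsHermitian) : OrthonormalBasis (Fin d) ℂ (EuclideanSpace ℂ (Fin d)) :=
  hM.eigenvectorBasis.reindex (Tuple.sort hM.eigenvalues).symm

theorem toEuclideanLin_sortedEigenbasis (hM : M.IsHermitian) (j : Fin d) :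
    M.toEuclideanLin (hM.sortedEigenbasis j) = (eigUp M hM j : ℂ) • hM.sortedEigenbasis j := by
  simp [sortedEigenbasis, toLpLin_apply, hM.mulVec_eigenvectorBasis, eigUp]

end Matrix.IsHermitian

section CourantFischer

variable {d : ℕ} {M : Matrix (Fin d) (Fin d) ℂ}

theorem eigUp_monotone (hM : M.IsHermitian) : Monotone (eigUp M hM) :=
  Tuple.monotone_sort _

theorem eigUp_le_of_forall_mem (hM : M.IsHermitian) {i : Fin d}
    {W : Submodule ℂ (EuclideanSpace ℂ (Fin d))} (hW : (i : ℕ) + 1 ≤ finrank ℂ W) {c : ℝ}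
    (h : ∀ x ∈ W, re ⟪x, M.toEuclideanLin x⟫_ℂ ≤ c * ‖x‖ ^ 2) : eigUp M hM i ≤ c := by
  set b := hM.sortedEigenbasis
  obtain ⟨x, ⟨hxV, hxW⟩, hx⟩ :=
    exists_mem_inf_ne_zero_of_lt_finrank_add (V := span ℂ (b '' Finset.Ici i)) (W := W)
      (by rw [b.finrank_span_image, Fin.card_Ici, finrank_euclideanSpace_fin]; omega)
  have hlow := le_re_inner_map_self_of_mem_span hM.toEuclideanLin_sortedEigenbasis
    (fun j hj => eigUp_monotone hM (Finset.mem_Ici.mp hj)) hxV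
  exact le_of_mul_le_mul_right (hlow.trans (h x hxW)) (by positivity)

theorem le_eigUp_of_forall_mem (hM : M.IsHermitian) {i : Fin d}
    {W : Submodule ℂ (EuclideanSpace ℂ (Fin d))} (hW : d - i ≤ finrank ℂ W) {c : ℝ}
    (h : ∀ x ∈ W, c * ‖x‖ ^ 2 ≤ re ⟪x, M.toEuclideanLin x⟫_ℂ) : c ≤ eigUp M hM i := by
  set b := hM.sortedEigenbasis
  obtain ⟨x, ⟨hxV, hxW⟩, hx⟩ :=
    exists_mem_inf_ne_zero_of_lt_finrank_add (V := span ℂ (b '' Finset.Iic i)) (W := W)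
      (by rw [b.finrank_span_image, Fin.card_Iic, finrank_euclideanSpace_fin]; omega)
  have hup := re_inner_map_self_le_of_mem_span hM.toEuclideanLin_sortedEigenbasis
    (fun j hj => eigUp_monotone hM (Finset.mem_Iic.mp hj)) hxV
  exact le_of_mul_le_mul_right ((h x hxW).trans hup) (by positivity)

theorem eigUp_le_eigUp_add_of_le {M' : Matrix (Fin d) (Fin d) ℂ} (hM : M.IsHermitian)
    (hM' : M'.IsHermitian) {c : ℝ} (h : M ≤ M' + c • 1) (i : Fin d) :
    eigUp M hM i ≤ eigUp M' hM' i + c := by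
  refine eigUp_le_of_forall_mem hM (W := span ℂ (hM'.sortedEigenbasis '' Finset.Iic i))
    (by rw [OrthonormalBasis.finrank_span_image, Fin.card_Iic]) fun x hx => ?_
  have hup := re_inner_map_self_le_of_mem_span hM'.toEuclideanLin_sortedEigenbasis
    (fun j hj => eigUp_monotone hM' (Finset.mem_Iic.mp hj)) hx
  have hle := re_inner_toEuclideanLin_le_of_le h x
  rw [re_inner_toEuclideanLin_add_smul_one] at hle
  linarith

theorem eigUp_neg (hM : M.IsHermitian) (i : Fin d) :
    eigUp (-M) hM.neg i = -eigUp M hM i.rev := by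
  set b := hM.sortedEigenbasis
  have hneg : ∀ x, re ⟪x, (-M).toEuclideanLin x⟫_ℂ = -re ⟪x, M.toEuclideanLin x⟫_ℂ := by
    simp [inner_neg_right]
  refine le_antisymm (eigUp_le_of_forall_mem _ (W := span ℂ (b '' Finset.Ici i.rev)) ?_ ?_)
    (le_eigUp_of_forall_mem _ (W := span ℂ (b '' Finset.Iic i.rev)) ?_ ?_)
  · rw [b.finrank_span_image, Fin.card_Ici, Fin.val_rev]; omega
  · intro x hx
    have := le_re_inner_map_self_of_mem_span hM.toEuclideanLin_sortedEigenbasis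
      (fun j hj => eigUp_monotone hM (Finset.mem_Ici.mp hj)) hx
    rw [hneg]; linarith
  · rw [b.finrank_span_image, Fin.card_Iic, Fin.val_rev]; omega
  · intro x hx
    have := re_inner_map_self_le_of_mem_span hM.toEuclideanLin_sortedEigenbasis
      (fun j hj => eigUp_monotone hM (Finset.mem_Iic.mp hj)) hx
    rw [hneg]; linarith

end CourantFischer

section SortedEigenvalues

variable {d : ℕ} {M : Matrix (Fin d) (Fin d) ℂ}

theorem eigDown_le_eigDown_add_of_le {M' : Matrix (Fin d) (Fin d) ℂ} (hM : M.IsHermitian)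
    (hM' : M'.IsHermitian) {c : ℝ} (h : M ≤ M' + c • 1) (i : Fin d) :
    eigDown M hM i ≤ eigDown M' hM' i + c :=
  eigUp_le_eigUp_add_of_le hM hM' h i.rev

theorem eigDown_neg (hM : M.IsHermitian) (i : Fin d) :
    eigDown (-M) hM.neg i = -eigUp M hM i := by
  rw [eigDown, eigUp_neg, Fin.rev_rev]

theorem eigDown_antitone (hM : M.IsHermitian) : Antitone (eigDown M hM) :=
  fun _ _ hij => eigUp_monotone hM (Fin.rev_le_rev.mpr hij)

theorem sum_comp_eigDown (hM : M.IsHermitian) (f : ℝ → ℝ) :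
    ∑ j, f (eigDown M hM j) = ∑ i, f (hM.eigenvalues i) :=
  (Equiv.sum_comp Fin.revPerm fun j => f (eigUp M hM j)).trans
    (Equiv.sum_comp (Tuple.sort hM.eigenvalues) fun i => f (hM.eigenvalues i))

theorem sum_eigUp (hM : M.IsHermitian) : ∑ j, eigUp M hM j = re M.trace := by
  rw [hM.trace_eq_sum_eigenvalues, map_sum]
  simp only [ofReal_re]
  exact Equiv.sum_comp (Tuple.sort hM.eigenvalues) hM.eigenvalues

theorem sum_eigDown (hM : M.IsHermitian) : ∑ j, eigDown M hM j = re M.trace :=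
  (Equiv.sum_comp Fin.revPerm (eigUp M hM)).trans (sum_eigUp hM)

end SortedEigenvalues

theorem sum_max_sub_eq_sum_filter_lt {n k : ℕ} {x : Fin n → ℝ} {c : ℝ}
    (hlt : ∀ j : Fin n, (j : ℕ) < k → c ≤ x j) (hge : ∀ j : Fin n, k ≤ (j : ℕ) → x j ≤ c) :
    ∑ j, max (x j - c) 0 = ∑ j ∈ Finset.univ.filter (fun j : Fin n => (j : ℕ) < k), (x j - c) := by
  rw [Finset.sum_filter]
  refine Finset.sum_congr rfl fun j _ => ?_
  split_ifs with hj
  · exact max_eq_left (sub_nonneg.mpr (hlt j hj))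
  · exact max_eq_right (sub_nonpos.mpr (hge j (not_lt.mp hj)))

theorem re_trace_cfc_max_sub_eigDown {d : ℕ} {S : Matrix (Fin d) (Fin d) ℂ} (hS : S.IsHermitian)
    (i : Fin d) :
    re (cfc (fun x => max (x - eigDown S hS i) 0) S).trace + ((i : ℕ) + 1) * eigDown S hS i =
      ∑ j ∈ Finset.univ.filter (fun j : Fin d => (j : ℕ) < (i : ℕ) + 1), eigDown S hS j := by
  rw [hS.re_trace_cfc, ← sum_comp_eigDown hS fun x => max (x - eigDown S hS i) 0,
    sum_max_sub_eq_sum_filter_lt (k := (i : ℕ) + 1)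
    (fun j hj => eigDown_antitone hS (Fin.le_def.mpr (by omega) : j ≤ i))
    (fun j hj => eigDown_antitone hS (Fin.le_def.mpr (by omega) : i ≤ j)), Finset.sum_sub_distrib,
    Finset.sum_const, Fin.card_filter_val_lt, nsmul_eq_mul, min_eq_right (by omega)]
  push_cast
  ring

theorem sum_eigDown_add_eigUp_le {d : ℕ} {A B : Matrix (Fin d) (Fin d) ℂ} (hA : A.IsHermitian)
    (hB : B.IsHermitian) (J : Finset (Fin d)) :
    ∑ i ∈ J, (eigDown A hA i + eigUp B hB i) ≤
      ∑ j ∈ Finset.univ.filter (fun j : Fin d => (j : ℕ) < J.card),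
        eigDown (A + B) (hA.add hB) j := by
  obtain rfl | hJ := J.eq_empty_or_nonempty
  · simp
  have hJd : J.card ≤ d := by simpa using J.card_le_univ
  set i : Fin d := ⟨J.card - 1, by have := hJ.card_pos; omega⟩
  have hiJ : (i : ℕ) + 1 = J.card := by have := hJ.card_pos; simp [i]; omega
  set c := eigDown (A + B) (hA.add hB) i
  set P := cfc (fun x => max (x - c) 0) (A + B)
  have hP : P.PosSemidef := nonneg_iff_posSemidef.mp (cfc_nonneg fun x _ => le_max_right _ _)
  have hPB : (P - B).IsHermitian := hP.isHermitian.sub hB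
  have hA_le_PB : A ≤ P - B + c • 1 := by
    rw [sub_add_eq_add_sub, le_sub_iff_add_le]
    exact le_cfc_max_sub_add_smul_one (hA.add hB) c
  have hnegB_le_PB : -B ≤ P - B + (0 : ℝ) • 1 := by
    rw [zero_smul, add_zero, neg_le_sub_iff_le_add, le_add_iff_nonneg_left]
    exact nonneg_iff_posSemidef.mpr hP
  have hA_le : ∀ j, eigDown A hA j ≤ eigDown (P - B) hPB j + c :=
    eigDown_le_eigDown_add_of_le hA hPB hA_le_PB
  have hB_le : ∀ j, 0 ≤ eigDown (P - B) hPB j + eigUp B hB j := fun j => by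
    have := eigDown_le_eigDown_add_of_le hB.neg hPB hnegB_le_PB j
    rw [eigDown_neg hB, add_zero] at this
    linarith
  have htr : ∑ j, (eigDown (P - B) hPB j + eigUp B hB j) = re P.trace := by
    rw [Finset.sum_add_distrib, sum_eigDown, sum_eigUp, trace_sub, map_sub, sub_add_cancel]
  calc ∑ j ∈ J, (eigDown A hA j + eigUp B hB j)
      ≤ ∑ j ∈ J, (eigDown (P - B) hPB j + eigUp B hB j + c) :=
        Finset.sum_le_sum fun j _ => by linarith [hA_le j]
    _ = ∑ j ∈ J, (eigDown (P - B) hPB j + eigUp B hB j) + J.card * c := by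
        rw [Finset.sum_add_distrib, Finset.sum_const, nsmul_eq_mul]
    _ ≤ re P.trace + J.card * c := by
        linarith [Finset.sum_le_univ_sum_of_nonneg (s := J) hB_le]
    _ = _ := by
        rw [← hiJ]
        push_cast
        exact re_trace_cfc_max_sub_eigDown _ i

theorem majorizes_of_forall_finset {n : ℕ} {x y : Fin n → ℝ}
    (h : ∀ J : Finset (Fin n), ∑ i ∈ J, x i ≤
      ∑ j ∈ Finset.univ.filter (fun j : Fin n => (j : ℕ) < J.card), sortDown y j)
    (hsum : ∑ j, x j = ∑ j, y j) : Majorizes y x := by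
  refine ⟨fun k => ?_, hsum⟩
  set F := Finset.univ.filter (fun j : Fin n => (j : ℕ) < k)
  have hinj : Set.InjOn (fun j : Fin n => Tuple.sort x j.rev) F :=
    fun a _ b _ hab => Fin.rev_injective ((Tuple.sort x).injective hab)
  set J := F.image fun j : Fin n => Tuple.sort x j.rev
  have hcard : Finset.univ.filter (fun j : Fin n => (j : ℕ) < J.card) = F := by
    rw [Finset.card_image_of_injOn hinj, Fin.card_filter_val_lt]
    ext j
    simp [F]
  have hJ := h J
  rwa [hcard, Finset.sum_image hinj] at hJ

/-- Lidskii: `λ^↓(A) + λ^↑(B)` is majorized by the eigenvalue vector of `A + B`. -/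
theorem lidskii {d : ℕ} (A B : Matrix (Fin d) (Fin d) ℂ)
    (hA : A.IsHermitian) (hB : B.IsHermitian) :
    Majorizes ((hA.add hB).eigenvalues) (fun j => eigDown A hA j + eigUp B hB j) := by
  refine majorizes_of_forall_finset (sum_eigDown_add_eigUp_le hA hB) ?_
  rw [Finset.sum_add_distrib, sum_eigDown, sum_eigUp, ← map_add, ← trace_add,
    ← sum_eigUp (hA.add hB)]
  exact Equiv.sum_comp _ _
end
end

section
/- Tightness of the fundamental entropic inequality: for ρ₁ = (1−ε)|ψ⟩⟨ψ| + (ε/(d−1))(𝟙 − |ψ⟩⟨ψ|) and ρ₂ = |ψ⟩⟨ψ| on ℂ^d with d ≥ 2 and ε ∈ (0,1), one has (1/2)‖ρ₁ − ρ₂‖₁ = ε and S(ρ₁) − S(ρ₂) = ε S(ρ₊) − ε S(ρ₋) + h(ε), where ρ± are the normalized positive/negative parts of ρ₁ − ρ₂. -/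
open Matrix BigOperators
open scoped ComplexOrder

noncomputable section

/-!
`ρ₂ = P := |ψ⟩⟨ψ|` is a rank-one projection and every matrix in sight is of the form
`a P + b (1 - P)`, whose spectrum is `a` once and `b` with multiplicity `d - 1` (conjugate by a
unitary whose first column is `ψ`). In particular `ρ₁ - ρ₂ = δ (1 - P) - ε P` with
`δ = ε / (d - 1)` is a difference of positive matrices with zero product, so uniqueness of the
Jordan decomposition forces `ρ₊ = (1 - P) / (d - 1)` and `ρ₋ = P`. Both identities then reduce to
arithmetic with the eigenvalues `1 - ε, δ, …, δ` of `ρ₁`.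
-/

open scoped MatrixOrder

theorem Fintype.sum_comp_ite_eq {n : Type*} [Fintype n] [DecidableEq n] (i₀ : n) (g : ℝ → ℝ)
    (a b : ℝ) :
    ∑ i, g (if i = i₀ then a else b) = g a + (Fintype.card n - 1) * g b := by
  rw [Fintype.sum_eq_add_sum_compl i₀, if_pos rfl, Finset.sum_congr rfl fun i hi => by
    rw [if_neg (Finset.mem_compl.1 hi ∘ Finset.mem_singleton.2)]]
  simp [Finset.card_compl, Nat.cast_sub (Fintype.card_pos_iff.2 ⟨i₀⟩)]

namespace Matrix

theorem IsHermitian.smul_add_smul_one_sub {n : Type*} [DecidableEq n] {P : Matrix n n ℂ}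
    (hP : P.IsHermitian) (a b : ℝ) :
    (a • P + b • (1 - P)).IsHermitian :=
  (hP.smul (.all a)).add ((isHermitian_one.sub hP).smul (.all b))

theorem isStarProjection_vecMulVec_star {n : Type*} [Fintype n] {ψ : n → ℂ}
    (hψ : ∑ i, Complex.normSq (ψ i) = 1) :
    IsStarProjection (vecMulVec ψ (star ψ)) where
  isIdempotentElem := by
    have hdot : star ψ ⬝ᵥ ψ = 1 := by
      simp only [dotProduct, Pi.star_apply, RCLike.star_def, ← Complex.normSq_eq_conj_mul_self]
      exact_mod_cast hψ
    rw [IsIdempotentElem, vecMulVec_mul_vecMulVec, hdot, one_smul]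
  isSelfAdjoint := (posSemidef_vecMulVec_self_star ψ).isHermitian

variable {n : Type*} [Fintype n] [DecidableEq n]

theorem IsHermitian.sum_comp_eigenvalues_of_eq_conj_diagonal {A U : Matrix n n ℂ}
    (hA : A.IsHermitian) (hU : U ∈ unitaryGroup n ℂ) {f : n → ℝ}
    (h : A = U * diagonal (fun i => (f i : ℂ)) * star U) (g : ℝ → ℝ) :
    ∑ i, g (hA.eigenvalues i) = ∑ i, g (f i) := by
  have hcharpoly : A.charpoly = (diagonal fun i => (f i : ℂ)).charpoly := by
    rw [h, charpoly_mul_comm, ← Matrix.mul_assoc, (mem_unitaryGroup_iff').1 hU, Matrix.one_mul]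
  have hroots := congrArg Polynomial.roots hcharpoly
  rw [hA.roots_charpoly_eq_eigenvalues, charpoly_diagonal, Polynomial.roots_prod _ _ (by
      simp [Finset.prod_ne_zero_iff, Polynomial.X_sub_C_ne_zero])] at hroots
  simp only [Polynomial.roots_X_sub_C, Multiset.bind_singleton] at hroots
  have hspec : Finset.univ.val.map hA.eigenvalues = Finset.univ.val.map f :=
    Multiset.map_injective Complex.ofReal_injective (by simpa [Multiset.map_map] using hroots)
  simpa [Multiset.map_map, Finset.sum_map_val] using congrArg (fun s => (s.map g).sum) hspec

theorem exists_mem_unitaryGroup_vecMulVec_eq_conj_diagonal {ψ : n → ℂ}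
    (hψ : ∑ i, Complex.normSq (ψ i) = 1) (i₀ : n) :
    ∃ U ∈ unitaryGroup n ℂ, vecMulVec ψ (star ψ) = U * diagonal (Pi.single i₀ 1) * star U := by
  have hnorm : ‖WithLp.toLp 2 ψ‖ = 1 := by
    simpa [EuclideanSpace.norm_eq, ← Complex.sq_norm] using hψ
  obtain ⟨b, hb⟩ := Orthonormal.exists_orthonormalBasis_extension_of_card_eq (𝕜 := ℂ)
    (v := fun _ : n => WithLp.toLp 2 ψ) (s := {i₀}) (by simp)
    ⟨fun _ => hnorm, fun i j hij => absurd (Subtype.ext (i.2.trans j.2.symm)) hij⟩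
  refine ⟨_, (EuclideanSpace.basisFun n ℂ).toMatrix_orthonormalBasis_mem_unitary b, ?_⟩
  ext i j
  simp [Matrix.mul_apply, diagonal_apply, Module.Basis.toMatrix_apply,
    OrthonormalBasis.coe_toBasis_repr_apply, EuclideanSpace.basisFun_repr, Pi.single_apply,
    vecMulVec_apply, hb i₀ rfl]

theorem smul_add_smul_one_sub_eq_conj_diagonal {P U : Matrix n n ℂ} (hU : U ∈ unitaryGroup n ℂ)
    {i₀ : n} (hP : P = U * diagonal (Pi.single i₀ 1) * star U) (a b : ℝ) :
    a • P + b • (1 - P) = U * diagonal (fun i => ((if i = i₀ then a else b : ℝ) : ℂ)) * star U := by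
  have hdiag : diagonal (fun i => ((if i = i₀ then a else b : ℝ) : ℂ)) =
      a • diagonal (Pi.single i₀ 1) + b • (1 - diagonal (Pi.single i₀ 1)) := by
    ext i j
    by_cases hij : i = j
    · subst hij
      by_cases hi : i = i₀ <;> simp [hi]
    · simp [hij]
  rw [hdiag, hP]
  simp only [Matrix.mul_add, Matrix.add_mul, Matrix.mul_sub, Matrix.sub_mul, Matrix.mul_smul,
    Matrix.smul_mul, Matrix.mul_one, (mem_unitaryGroup_iff).1 hU]

theorem IsHermitian.sum_comp_eigenvalues_smul_vecMulVec_add_smul_one_sub {ψ : n → ℂ}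
    (hψ : ∑ i, Complex.normSq (ψ i) = 1) {a b : ℝ}
    (hA : (a • vecMulVec ψ (star ψ) + b • (1 - vecMulVec ψ (star ψ))).IsHermitian)
    (g : ℝ → ℝ) :
    ∑ i, g (hA.eigenvalues i) = g a + (Fintype.card n - 1) * g b := by
  obtain ⟨i₀⟩ : Nonempty n := by
    by_contra h
    simp [not_nonempty_iff.1 h] at hψ
  obtain ⟨U, hU, hP⟩ := exists_mem_unitaryGroup_vecMulVec_eq_conj_diagonal hψ i₀
  rw [hA.sum_comp_eigenvalues_of_eq_conj_diagonal hU
    (smul_add_smul_one_sub_eq_conj_diagonal hU hP a b), Fintype.sum_comp_ite_eq]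

theorem PosSemidef.eq_and_eq_of_sub_eq_sub {A B A' B' : Matrix n n ℂ} (hA : A.PosSemidef)
    (hB : B.PosSemidef) (hA' : A'.PosSemidef) (hB' : B'.PosSemidef) (hAB : A * B = 0)
    (hAB' : A' * B' = 0) (h : A - B = A' - B') : A = A' ∧ B = B' := by
  obtain ⟨hpos, hneg⟩ := CFC.posPart_negPart_unique rfl hAB hA.nonneg hB.nonneg
  obtain ⟨hpos', hneg'⟩ := CFC.posPart_negPart_unique h hAB' hA'.nonneg hB'.nonneg
  exact ⟨hpos.symm.trans hpos', hneg.symm.trans hneg'⟩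

end Matrix

section

variable {n : Type*} [Fintype n] [DecidableEq n]

theorem vnEntropy_smul_vecMulVec_add_smul_one_sub {ψ : n → ℂ}
    (hψ : ∑ i, Complex.normSq (ψ i) = 1) (a b : ℝ) :
    vnEntropy (a • vecMulVec ψ (star ψ) + b • (1 - vecMulVec ψ (star ψ))) =
      eta a + (Fintype.card n - 1) * eta b := by
  have hA :=
    (isStarProjection_vecMulVec_star hψ).isSelfAdjoint.isHermitian.smul_add_smul_one_sub a b
  rw [vnEntropy, dif_pos hA, hA.sum_comp_eigenvalues_smul_vecMulVec_add_smul_one_sub hψ]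

theorem vnEntropy_vecMulVec_star {ψ : n → ℂ} (hψ : ∑ i, Complex.normSq (ψ i) = 1) :
    vnEntropy (vecMulVec ψ (star ψ)) = 0 := by
  simpa [eta] using vnEntropy_smul_vecMulVec_add_smul_one_sub hψ 1 0

theorem traceNorm_smul_vecMulVec_add_smul_one_sub {ψ : n → ℂ}
    (hψ : ∑ i, Complex.normSq (ψ i) = 1) (a b : ℝ) :
    traceNorm (a • vecMulVec ψ (star ψ) + b • (1 - vecMulVec ψ (star ψ))) =
      |a| + (Fintype.card n - 1) * |b| := by
  have hA :=
    (isStarProjection_vecMulVec_star hψ).isSelfAdjoint.isHermitian.smul_add_smul_one_sub a b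
  rw [traceNorm, dif_pos hA, hA.sum_comp_eigenvalues_smul_vecMulVec_add_smul_one_sub hψ]

end

/-- tightness of the fundamental entropic inequality. -/
theorem fundamental_entropic_inequality_tight {d : ℕ} (hd : 2 ≤ d)
    (ψ : Fin d → ℂ) (hψ : ∑ i, Complex.normSq (ψ i) = 1)
    (ε : ℝ) (hε : ε ∈ Set.Ioo (0 : ℝ) 1)
    (ρ₁ ρ₂ ρp ρm : Matrix (Fin d) (Fin d) ℂ)
    (hρ₂ : ρ₂ = Matrix.of fun i j => ψ i * star (ψ j))
    (hρ₁ : ρ₁ = (1 - ε) • ρ₂ + (ε / ((d : ℝ) - 1)) • ((1 : Matrix (Fin d) (Fin d) ℂ) - ρ₂))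
    (hp : IsDensity ρp) (hm : IsDensity ρm)
    (hJH : ρ₁ - ρ₂ = ε • ρp - ε • ρm)
    (horth : ρp * ρm = 0) :
    traceNorm (ρ₁ - ρ₂) / 2 = ε ∧
    vnEntropy ρ₁ - vnEntropy ρ₂ = ε * vnEntropy ρp - ε * vnEntropy ρm + binEnt ε := by
  have hε0 := hε.1
  have hd1 : (0 : ℝ) < d - 1 := sub_pos.2 (by exact_mod_cast (by omega : 1 < d))
  set δ := ε / ((d : ℝ) - 1)
  change ρ₂ = vecMulVec ψ (star ψ) at hρ₂
  subst hρ₁ hρ₂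
  set P := vecMulVec ψ (star ψ)
  have hP := isStarProjection_vecMulVec_star hψ
  have hΔ : (1 - ε) • P + δ • (1 - P) - P = δ • (1 - P) - ε • P := by module
  obtain ⟨hp', hm'⟩ := PosSemidef.eq_and_eq_of_sub_eq_sub (hp.1.smul hε0.le) (hm.1.smul hε0.le)
    (hP.one_sub_nonneg.posSemidef.smul (div_pos hε0 hd1).le) (hP.nonneg.posSemidef.smul hε0.le)
    (by rw [smul_mul_smul_comm, horth, smul_zero])
    (by rw [smul_mul_smul_comm, hP.one_sub_mul_self, smul_zero]) (hJH.symm.trans hΔ)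
  have hρm : ρm = P := smul_right_injective _ hε0.ne' hm'
  have hρp : ρp = (0 : ℝ) • P + (1 / ((d : ℝ) - 1)) • (1 - P) := by
    refine smul_right_injective _ hε0.ne' ?_
    dsimp only
    rw [hp', zero_smul, smul_add, smul_zero, zero_add, smul_smul, mul_one_div]
  constructor
  · rw [show (1 - ε) • P + δ • (1 - P) - P = (-ε) • P + δ • (1 - P) by module,
      traceNorm_smul_vecMulVec_add_smul_one_sub hψ, Fintype.card_fin, abs_neg,
      abs_of_pos hε0, abs_of_pos (div_pos hε0 hd1)]
    field_simp
    ring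
  · rw [hρp, hρm, vnEntropy_vecMulVec_star hψ, vnEntropy_smul_vecMulVec_add_smul_one_sub hψ,
      vnEntropy_smul_vecMulVec_add_smul_one_sub hψ, Fintype.card_fin]
    simp only [eta, binEnt, δ, Real.log_div hε0.ne' hd1.ne', one_div, Real.log_inv]
    field_simp
    ring
end
end

section
/- For density matrices ρ₊ ⊥ ρ₋ with Δ := ε(ρ₊ − ρ₋) for ε ∈ (0,1), one has λ^↓(Δ) + λ^↑(ρ₋) = λ(ε ρ₊ + (1−ε) ρ₋) up to reordering, and hence H(λ^↓(Δ) + λ^↑(ρ₋)) = S(ρ₋ + Δ). -/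
open Matrix BigOperators
open scoped ComplexOrder

noncomputable section

/-!
Since `ρ₊ ρ₋ = 0` with both factors positive, `ρ₊` and `ρ₋` are the positive and negative parts
of `ρ₊ - ρ₋ = ε⁻¹ Δ`. Hence `ρ₋ = f(Δ)` with `f t = (t / ε)⁻`, and the mixture
`ε ρ₊ + (1 - ε) ρ₋ = ρ₋ + Δ` is `(id + f)(Δ)`. As `f` is antitone, listing the eigenvalues of `Δ`
in decreasing order lists those of `ρ₋` in increasing order, so `λ^↓(Δ) + λ^↑(ρ₋)` is `id + f`
applied to the spectrum of `Δ`, which is the spectrum of the mixture.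
-/

open Polynomial in
lemma Matrix.IsHermitian.map_eigenvalues_of_eq_cfc {𝕜 n : Type*} [RCLike 𝕜] [Fintype n]
    [DecidableEq n] {A B : Matrix n n 𝕜} (hA : A.IsHermitian) (hB : B.IsHermitian) {f : ℝ → ℝ}
    (hBA : B = cfc f A) :
    Finset.univ.val.map hB.eigenvalues = Finset.univ.val.map (f ∘ hA.eigenvalues) := by
  apply Multiset.map_injective (RCLike.ofReal_injective (K := 𝕜))
  rw [Multiset.map_map, Multiset.map_map, ← hB.roots_charpoly_eq_eigenvalues, hBA,
    hA.charpoly_cfc_eq, roots_prod _ _ (Finset.prod_ne_zero_iff.mpr fun i _ =>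
      X_sub_C_ne_zero _)]
  simp [Function.comp_def]

lemma Multiset.map_univ_comp_perm {α β : Type*} [Fintype α] (u : α → β) (σ : Equiv.Perm α) :
    Finset.univ.val.map (u ∘ σ) = Finset.univ.val.map u := by
  rw [← Multiset.map_map, Multiset.map_univ_val_equiv]

lemma Tuple.comp_sort_eq_of_map_univ_eq {α : Type*} [LinearOrder α] {n : ℕ} {u w : Fin n → α}
    (h : Finset.univ.val.map u = Finset.univ.val.map w) (hw : Monotone w) :
    u ∘ Tuple.sort u = w := by
  apply List.ofFn_injective
  refine List.Perm.eq_of_sortedLE (Tuple.monotone_sort u).sortedLE_ofFn hw.sortedLE_ofFn ?_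
  rw [← Multiset.coe_eq_coe, ← Fin.univ_val_map, ← Fin.univ_val_map,
    Multiset.map_univ_comp_perm, h]

lemma Tuple.exists_perm_of_map_univ_eq {α : Type*} [LinearOrder α] {n : ℕ} {u w : Fin n → α}
    (h : Finset.univ.val.map u = Finset.univ.val.map w) :
    ∃ e : Equiv.Perm (Fin n), ∀ i, u i = w (e i) := by
  have hsort : u ∘ Tuple.sort u = w ∘ Tuple.sort w :=
    Tuple.comp_sort_eq_of_map_univ_eq (by rw [Multiset.map_univ_comp_perm, h])
      (Tuple.monotone_sort w)
  refine ⟨(Tuple.sort u).symm.trans (Tuple.sort w), fun i => ?_⟩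
  simpa using congrFun hsort ((Tuple.sort u).symm i)

section eigDown

variable {d : ℕ} {A : Matrix (Fin d) (Fin d) ℂ} (hA : A.IsHermitian)

lemma antitone_eigDown : Antitone (eigDown A hA) :=
  fun _ _ hij => Tuple.monotone_sort hA.eigenvalues (Fin.rev_le_rev.mpr hij)

lemma map_univ_comp_eigDown (g : ℝ → ℝ) :
    Finset.univ.val.map (g ∘ eigDown A hA) = Finset.univ.val.map (g ∘ hA.eigenvalues) :=
  Multiset.map_univ_comp_perm (g ∘ hA.eigenvalues) (Fin.revPerm.trans (Tuple.sort _))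

lemma eigUp_eq_comp_eigDown_of_eq_cfc {B : Matrix (Fin d) (Fin d) ℂ} (hB : B.IsHermitian)
    {f : ℝ → ℝ} (hf : Antitone f) (hBA : B = cfc f A) :
    eigUp B hB = f ∘ eigDown A hA :=
  Tuple.comp_sort_eq_of_map_univ_eq
    (by rw [hA.map_eigenvalues_of_eq_cfc hB hBA, map_univ_comp_eigDown])
    (hf.comp (antitone_eigDown hA))

end eigDown

lemma shannonH_eq_vnEntropy_of_perm {d : ℕ} {B : Matrix (Fin d) (Fin d) ℂ} (hB : B.IsHermitian)
    {v : Fin d → ℝ} (e : Equiv.Perm (Fin d)) (hv : ∀ i, v i = hB.eigenvalues (e i)) :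
    shannonH v = vnEntropy B := by
  rw [vnEntropy, dif_pos hB, shannonH]
  simp only [hv]
  exact Equiv.sum_comp e (fun i => eta (hB.eigenvalues i))

open scoped MatrixOrder in
lemma eq_cfc_negPart_of_mul_eq_zero {𝕜 n : Type*} [RCLike 𝕜] [Fintype n] [DecidableEq n]
    {P Q : Matrix n n 𝕜} (hP : P.PosSemidef) (hQ : Q.PosSemidef) (hPQ : P * Q = 0)
    {ε : ℝ} (hε : ε ≠ 0) :
    Q = cfc (fun t => (ε⁻¹ * t)⁻) (ε • (P - Q)) := by
  have hsa : IsSelfAdjoint (ε • (P - Q)) :=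
    (IsSelfAdjoint.all ε).smul (hP.isHermitian.sub hQ.isHermitian).isSelfAdjoint
  change Q = cfc (fun t : ℝ => (ε⁻¹ • t)⁻) _
  rw [cfc_comp_smul ε⁻¹ (fun t : ℝ => t⁻) _ (by fun_prop) hsa, smul_smul, inv_mul_cancel₀ hε,
    one_smul, ← cfcₙ_eq_cfc, ← CFC.negPart_def]
  exact (CFC.posPart_negPart_unique rfl hPQ hP.nonneg hQ.nonneg).2.symm

/-- for `Δ = ε(ρ₊ - ρ₋)` with `ρ₊ ⊥ ρ₋`, the vector `λ^↓(Δ) + λ^↑(ρ₋)` equals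
the eigenvalue vector of `ε ρ₊ + (1-ε) ρ₋` up to reordering, and
`H(λ^↓(Δ) + λ^↑(ρ₋)) = S(ρ₋ + Δ)`. -/
theorem eig_vector_eq_and_entropy {d : ℕ} (ρp ρm : Matrix (Fin d) (Fin d) ℂ)
    (hp : IsDensity ρp) (hm : IsDensity ρm) (horth : ρp * ρm = 0)
    (ε : ℝ) (hε : ε ∈ Set.Ioo (0 : ℝ) 1)
    (Δ : Matrix (Fin d) (Fin d) ℂ) (hΔdef : Δ = ε • (ρp - ρm))
    (hΔ : Δ.IsHermitian) (hmix : (ε • ρp + (1 - ε) • ρm).IsHermitian) :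
    (∃ e : Equiv.Perm (Fin d),
      ∀ i, eigDown Δ hΔ i + eigUp ρm hm.1.isHermitian i = hmix.eigenvalues (e i)) ∧
    shannonH (fun i => eigDown Δ hΔ i + eigUp ρm hm.1.isHermitian i) = vnEntropy (ρm + Δ) := by
  obtain ⟨hε0, -⟩ := hε
  set f : ℝ → ℝ := fun t => (ε⁻¹ * t)⁻
  have hf : Antitone f := fun s t hst =>
    negPart_anti (mul_le_mul_of_nonneg_left hst (inv_nonneg.mpr hε0.le))
  have hρm : ρm = cfc f Δ := hΔdef ▸ eq_cfc_negPart_of_mul_eq_zero hp.1 hm.1 horth hε0.ne'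
  have hmix_eq : ρm + Δ = ε • ρp + (1 - ε) • ρm := by rw [hΔdef]; module
  have hmix_cfc : ε • ρp + (1 - ε) • ρm = cfc (fun t => t + f t) Δ := by
    rw [cfc_add Δ (fun t => t) f continuousOn_id (by fun_prop), cfc_id' ℝ Δ, ← hρm, ← hmix_eq,
      add_comm]
  set v : Fin d → ℝ := fun i => eigDown Δ hΔ i + eigUp ρm hm.1.isHermitian i
  have hsum : v = (fun t => t + f t) ∘ eigDown Δ hΔ := by
    ext i
    simp only [v, eigUp_eq_comp_eigDown_of_eq_cfc hΔ hm.1.isHermitian hf hρm, Function.comp_apply]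
  obtain ⟨e, he⟩ := Tuple.exists_perm_of_map_univ_eq (u := v) (w := hmix.eigenvalues) (by
    rw [hsum, map_univ_comp_eigDown, hΔ.map_eigenvalues_of_eq_cfc hmix hmix_cfc])
  exact ⟨⟨e, he⟩, hmix_eq ▸ shannonH_eq_vnEntropy_of_perm hmix e he⟩
end
end

section
/- Let ρ₊ ⊥ ρ₋ be density matrices and Δ := ε(ρ₊ − ρ₋) with ε ∈ (0,1). Then over all density matrices ω with λ^↓(Δ) + λ^↑(ω) ≥ 0 entrywise, the maximum of H(λ^↓(Δ) + λ^↑(ω)) − H(λ(ω)) is attained at ω = ρ₋ and equals S(ρ₋ + Δ) − S(ρ₋). -/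
open Matrix BigOperators
open scoped ComplexOrder

noncomputable section

/-!
Because `ρ₊ ρ₋ = 0`, the matrices `ρ₋` and `ρ₋ + Δ` are diagonal in an eigenbasis of `Δ`: on a
`δ`-eigenvector `ρ₋` acts by `g(δ) = max(-δ, 0) / ε`. As `g` is antitone, `λ^↑(ρ₋) = g(λ^↓(Δ))`
and `S(ρ₋ + Δ) = H(λ^↓(Δ) + λ^↑(ρ₋))`. For `δ < 0` the function `x ↦ η(δ + x) - η(x)` is concave
with slope `-log(1 - ε)` at `x = g(δ)`; for `δ ≥ 0` subadditivity of `η` bounds it by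
`η(δ) - x log(1 - ε)`. Summing these tangent-line bounds over the eigenvalues, the linear terms
cancel because `λ(ω)` and `λ(ρ₋)` both sum to `1`.
-/

open Real

lemma eta_add_le {a b : ℝ} (ha : 0 ≤ a) (hb : 0 ≤ b) : eta (a + b) ≤ eta a + eta b := by
  rcases ha.eq_or_lt with rfl | ha
  · simp [eta]
  rcases hb.eq_or_lt with rfl | hb
  · simp [eta]
  have hla : log a ≤ log (a + b) := log_le_log ha (by linarith)
  have hlb : log b ≤ log (a + b) := log_le_log hb (by linarith)
  simp only [eta]
  nlinarith [mul_le_mul_of_nonneg_left hla ha.le, mul_le_mul_of_nonneg_left hlb hb.le]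

lemma sub_le_mul_log_sub_mul_log {s x : ℝ} (hs : 0 ≤ s) (hx : 0 < x) :
    s - x ≤ s * log s - s * log x := by
  rcases hs.eq_or_lt with rfl | hs
  · simpa using hx.le
  have h := mul_le_mul_of_nonneg_left (log_le_sub_one_of_pos (div_pos hx hs)) hs.le
  rw [log_div hx.ne' hs.ne', mul_sub, mul_sub, mul_div_cancel₀ _ hs.ne', mul_one] at h
  linarith

/-- The tangent line of the concave function `x ↦ η(x - a) - η(x)` at `q`. -/
lemma eta_sub_sub_eta_le_tangent {a p q : ℝ} (ha : 0 < a) (hap : a ≤ p) (haq : a < q) :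
    eta (p - a) - eta p ≤ eta (q - a) - eta q + log (q / (q - a)) * (p - q) := by
  have hp : 0 < p := ha.trans_le hap
  have hq : 0 < q := ha.trans haq
  have hqa : 0 < q - a := sub_pos.mpr haq
  have h1 :=
    sub_le_mul_log_sub_mul_log (sub_nonneg.mpr hap) (show 0 < (q - a) * p / q by positivity)
  have h2 := sub_le_mul_log_sub_mul_log ha.le (show 0 < a * p / q by positivity)
  rw [log_div (by positivity) hq.ne', log_mul hqa.ne' hp.ne'] at h1
  rw [log_div (by positivity) hq.ne', log_mul ha.ne' hp.ne'] at h2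
  rw [log_div hq.ne' hqa.ne']
  have e1 : (q - a) * p / q = p - a * p / q := by field_simp
  simp only [eta]
  rw [e1] at h1
  linear_combination h1 + h2

/-- The eigenvalue of `ρ₋` on a `δ`-eigenvector of `Δ = ε • (ρ₊ - ρ₋)`. -/
def minusEigenvalue (ε δ : ℝ) : ℝ := max (-δ) 0 / ε

lemma minusEigenvalue_antitone {ε : ℝ} (hε : 0 < ε) : Antitone (minusEigenvalue ε) :=
  fun _ _ h => div_le_div_of_nonneg_right (max_le_max_right 0 (neg_le_neg h)) hε.le

/-- `minusEigenvalue ε δ` is where `x ↦ η(δ + x) - η(x)` has slope `-log (1 - ε)`. -/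
lemma eta_add_sub_eta_le {ε δ p : ℝ} (hε0 : 0 < ε) (hε1 : ε < 1) (hp : 0 ≤ p)
    (hδp : 0 ≤ δ + p) :
    eta (δ + p) - eta p ≤ eta (δ + minusEigenvalue ε δ) - eta (minusEigenvalue ε δ)
      - log (1 - ε) * (p - minusEigenvalue ε δ) := by
  have hlog : log (1 - ε) < 0 := log_neg (by linarith) (by linarith)
  rcases le_or_gt 0 δ with hδ | hδ
  · have h0 : minusEigenvalue ε δ = 0 := by simp [minusEigenvalue, hδ]
    have heta0 : eta 0 = 0 := by simp [eta]
    rw [h0, add_zero, heta0, sub_zero, sub_zero]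
    linarith [eta_add_le hδ hp, mul_nonneg (neg_nonneg.mpr hlog.le) hp]
  · obtain ⟨a, rfl⟩ : ∃ a, δ = -a := ⟨-δ, (neg_neg δ).symm⟩
    have ha : 0 < a := neg_lt_zero.mp hδ
    have hq : minusEigenvalue ε (-a) = a / ε := by simp [minusEigenvalue, ha.le]
    have haq : a < a / ε := by rw [lt_div_iff₀ hε0]; nlinarith
    have hslope : log (a / ε / (a / ε - a)) = -log (1 - ε) := by
      rw [show a / ε - a = (1 - ε) * (a / ε) by field_simp,
        div_mul_cancel_right₀ (by positivity), log_inv]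
    have h := eta_sub_sub_eta_le_tangent ha (show a ≤ p by linarith) haq
    rw [hslope] at h
    simp only [hq, neg_add_eq_sub]
    linarith

namespace Matrix

variable {𝕜 : Type*} [RCLike 𝕜] {n : Type*} [Fintype n]

lemma PosSemidef.mulVec_eq_zero_of_mulVec_mulVec_eq_smul {N : Matrix n n 𝕜} (hN : N.PosSemidef)
    {c : ℝ} (hc : c ≤ 0) {u : n → 𝕜} (h : N *ᵥ (N *ᵥ u) = c • (N *ᵥ u)) : N *ᵥ u = 0 := by
  have hnorm : star (N *ᵥ u) ⬝ᵥ (N *ᵥ u) = c • (star u ⬝ᵥ (N *ᵥ u)) := by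
    rw [star_mulVec, ← dotProduct_mulVec, hN.isHermitian.eq, h, dotProduct_smul]
  have hnonpos : star (N *ᵥ u) ⬝ᵥ (N *ᵥ u) ≤ 0 := by
    rw [hnorm]
    exact smul_nonpos_of_nonpos_of_nonneg hc (hN.dotProduct_mulVec_nonneg u)
  exact dotProduct_star_self_eq_zero.mp (hnonpos.antisymm (dotProduct_star_self_nonneg _))

lemma mulVec_eq_minusEigenvalue_smul {ρp ρm : Matrix n n 𝕜} (hp : ρp.PosSemidef)
    (hm : ρm.PosSemidef) (horth : ρp * ρm = 0) {ε : ℝ} (hε : 0 < ε) {δ : ℝ} {u : n → 𝕜}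
    (hu : (ε • (ρp - ρm)) *ᵥ u = δ • u) : ρm *ᵥ u = minusEigenvalue ε δ • u := by
  have horth' : ρm * ρp = 0 := by
    simpa [hp.isHermitian.eq, hm.isHermitian.eq] using congrArg conjTranspose horth
  have hdiff : ρp *ᵥ u - ρm *ᵥ u = (δ / ε) • u := by
    rw [← sub_mulVec, div_eq_inv_mul, ← smul_smul, ← hu, smul_mulVec, smul_smul,
      inv_mul_cancel₀ hε.ne', one_smul]
  -- `ρ₊ ρ₋ = 0` makes `ρ₊ u` (if `δ < 0`) or `ρ₋ u` (if `δ ≥ 0`) an eigenvector of a positive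
  -- semidefinite matrix for a nonpositive eigenvalue, which forces it to vanish.
  rcases lt_or_ge δ 0 with hδ | hδ
  · have hpp : ρp *ᵥ (ρp *ᵥ u) = (δ / ε) • (ρp *ᵥ u) := by
      have := congrArg (ρp *ᵥ ·) hdiff
      simpa [mulVec_sub, mulVec_mulVec, horth, mulVec_smul] using this
    have hpu := hp.mulVec_eq_zero_of_mulVec_mulVec_eq_smul (div_neg_of_neg_of_pos hδ hε).le hpp
    rw [hpu, zero_sub, neg_eq_iff_eq_neg, ← neg_smul] at hdiff
    rw [hdiff, minusEigenvalue, max_eq_left (by linarith), neg_div]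
  · have hmm : ρm *ᵥ (ρm *ᵥ u) = (-δ / ε) • (ρm *ᵥ u) := by
      have := congrArg (ρm *ᵥ ·) hdiff
      simp only [mulVec_sub, mulVec_mulVec, horth', zero_mulVec, zero_sub, mulVec_smul] at this
      rw [mulVec_mulVec, neg_div, neg_smul, ← this, neg_neg]
    rw [hm.mulVec_eq_zero_of_mulVec_mulVec_eq_smul
      (div_nonpos_of_nonpos_of_nonneg (by linarith) hε.le) hmm]
    simp [minusEigenvalue, hδ]

open Polynomial in
lemma IsHermitian.univ_val_map_eigenvalues_of_mulVec_eigenvectorBasis [DecidableEq n]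
    {A B : Matrix n n 𝕜} (hA : A.IsHermitian) (hB : B.IsHermitian) (f : n → ℝ)
    (h : ∀ j, B *ᵥ ⇑(hA.eigenvectorBasis j) = f j • ⇑(hA.eigenvectorBasis j)) :
    Finset.univ.val.map hB.eigenvalues = Finset.univ.val.map f := by
  set U : Matrix n n 𝕜 := (hA.eigenvectorUnitary : Matrix n n 𝕜)
  set D : Matrix n n 𝕜 := diagonal (RCLike.ofReal ∘ f)
  have hBU : B * U = U * D := by
    ext i j
    simp only [D, mul_diagonal]
    simpa [U, mulVec, dotProduct, mul_apply, RCLike.real_smul_eq_coe_mul, mul_comm]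
      using congrFun (h j) i
  have hconj : B = U * D * star U := by
    rw [← hBU, mul_assoc, Unitary.mul_star_self_of_mem hA.eigenvectorUnitary.2, mul_one]
  have hchar : B.charpoly = ∏ i, (X - C (f i : 𝕜)) := by
    rw [hconj, charpoly_mul_comm, ← mul_assoc,
      Unitary.star_mul_self_of_mem hA.eigenvectorUnitary.2, one_mul, charpoly_diagonal]
    rfl
  have hroots : B.charpoly.roots = Finset.univ.val.map (RCLike.ofReal ∘ f) := by
    rw [hchar, roots_prod _ _ (by simp [Finset.prod_ne_zero_iff, X_sub_C_ne_zero])]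
    simp
  rw [hB.roots_charpoly_eq_eigenvalues, ← Multiset.map_map, ← Multiset.map_map] at hroots
  exact Multiset.map_injective RCLike.ofReal_injective hroots

end Matrix

lemma Monotone.eq_of_univ_val_map_eq {n : ℕ} {α : Type*} [LinearOrder α] {x y : Fin n → α}
    (hx : Monotone x) (hy : Monotone y) (h : Finset.univ.val.map x = Finset.univ.val.map y) :
    x = y := by
  rw [Fin.univ_val_map, Fin.univ_val_map] at h
  exact List.ofFn_injective <|
    (Multiset.coe_eq_coe.mp h).eq_of_sortedLE hx.sortedLE_ofFn hy.sortedLE_ofFn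

lemma Fintype.sum_comp_eq_of_univ_val_map_eq {ι α M : Type*} [Fintype ι] [AddCommMonoid M]
    {x y : ι → α} (h : Finset.univ.val.map x = Finset.univ.val.map y) (F : α → M) :
    ∑ i, F (x i) = ∑ i, F (y i) := by
  simpa only [Multiset.map_map, Finset.sum_map_val, Function.comp_apply]
    using congrArg (fun s => (s.map F).sum) h

lemma Fintype.univ_val_map_comp_equiv {ι α : Type*} [Fintype ι] (f : ι → α) (e : ι ≃ ι) :
    Finset.univ.val.map (f ∘ e) = Finset.univ.val.map f := by
  rw [← Multiset.map_map, Multiset.map_univ_val_equiv]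

section SortedEigenvalues

variable {d : ℕ} {A : Matrix (Fin d) (Fin d) ℂ}

lemma eigDown_eq_comp (hA : A.IsHermitian) :
    eigDown A hA = hA.eigenvalues ∘ (Fin.revPerm.trans (Tuple.sort hA.eigenvalues)) :=
  rfl

lemma eigDown_antitone_s11 (hA : A.IsHermitian) : Antitone (eigDown A hA) :=
  (Tuple.monotone_sort _).comp_antitone Fin.rev_anti

lemma sum_comp_eigUp (hA : A.IsHermitian) (F : ℝ → ℝ) :
    ∑ i, F (eigUp A hA i) = ∑ i, F (hA.eigenvalues i) :=
  Equiv.sum_comp (Tuple.sort hA.eigenvalues) (F ∘ hA.eigenvalues)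

lemma sum_comp_eigDown_s11 (hA : A.IsHermitian) (F : ℝ → ℝ) :
    ∑ i, F (eigDown A hA i) = ∑ i, F (hA.eigenvalues i) :=
  Equiv.sum_comp (Fin.revPerm.trans (Tuple.sort hA.eigenvalues)) (F ∘ hA.eigenvalues)

lemma vnEntropy_eq_shannonH_eigUp (hA : A.IsHermitian) : vnEntropy A = shannonH (eigUp A hA) := by
  rw [vnEntropy, dif_pos hA, shannonH, sum_comp_eigUp]

lemma IsDensity.sum_eigUp {ω : Matrix (Fin d) (Fin d) ℂ} (hω : IsDensity ω) :
    ∑ i, eigUp ω hω.1.isHermitian i = 1 := by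
  have htr := hω.2.symm.trans hω.1.isHermitian.trace_eq_sum_eigenvalues
  refine (Equiv.sum_comp (Tuple.sort _) _).trans (RCLike.ofReal_injective (K := ℂ) ?_)
  rw [RCLike.ofReal_sum, ← htr, RCLike.ofReal_one]

variable {B : Matrix (Fin d) (Fin d) ℂ}

lemma eigUp_eq_comp_eigDown (hA : A.IsHermitian) (hB : B.IsHermitian) {g : ℝ → ℝ}
    (hg : Antitone g)
    (h : ∀ j, B *ᵥ ⇑(hA.eigenvectorBasis j) = g (hA.eigenvalues j) • ⇑(hA.eigenvectorBasis j)) :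
    eigUp B hB = g ∘ eigDown A hA := by
  refine (Tuple.monotone_sort _).eq_of_univ_val_map_eq (hg.comp (eigDown_antitone_s11 hA)) ?_
  rw [Fintype.univ_val_map_comp_equiv,
    hA.univ_val_map_eigenvalues_of_mulVec_eigenvectorBasis hB _ h, eigDown_eq_comp,
    ← Function.comp_assoc, Fintype.univ_val_map_comp_equiv]
  rfl

lemma vnEntropy_eq_sum_eta_comp_eigDown (hA : A.IsHermitian) (hB : B.IsHermitian) (f : ℝ → ℝ)
    (h : ∀ j, B *ᵥ ⇑(hA.eigenvectorBasis j) = f (hA.eigenvalues j) • ⇑(hA.eigenvectorBasis j)) :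
    vnEntropy B = ∑ i, eta (f (eigDown A hA i)) := by
  rw [vnEntropy, dif_pos hB, sum_comp_eigDown_s11 hA (fun x => eta (f x))]
  exact Fintype.sum_comp_eq_of_univ_val_map_eq
    (hA.univ_val_map_eigenvalues_of_mulVec_eigenvectorBasis hB _ h) eta

end SortedEigenvalues

lemma shannonH_add_sub_shannonH_le {d : ℕ} {ε : ℝ} (hε0 : 0 < ε) (hε1 : ε < 1)
    (δ p : Fin d → ℝ) (hp : ∀ i, 0 ≤ p i) (hδp : ∀ i, 0 ≤ δ i + p i)
    (hsum : ∑ i, p i = ∑ i, minusEigenvalue ε (δ i)) :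
    shannonH (fun i => δ i + p i) - shannonH p ≤
      shannonH (fun i => δ i + minusEigenvalue ε (δ i)) -
        shannonH (fun i => minusEigenvalue ε (δ i)) := by
  simp only [shannonH, ← Finset.sum_sub_distrib]
  calc ∑ i, (eta (δ i + p i) - eta (p i))
      ≤ ∑ i, (eta (δ i + minusEigenvalue ε (δ i)) - eta (minusEigenvalue ε (δ i))
          - log (1 - ε) * (p i - minusEigenvalue ε (δ i))) :=
        Finset.sum_le_sum fun i _ => eta_add_sub_eta_le hε0 hε1 (hp i) (hδp i)
    _ = ∑ i, (eta (δ i + minusEigenvalue ε (δ i)) - eta (minusEigenvalue ε (δ i))) := by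
        simp only [Finset.sum_sub_distrib, ← Finset.mul_sum, hsum, sub_self, mul_zero, sub_zero]

/-- over all density matrices `ω` with `λ^↓(Δ) + λ^↑(ω) ≥ 0` entrywise, the
maximum of `H(λ^↓(Δ) + λ^↑(ω)) - H(λ(ω))` is attained at `ω = ρ₋` and equals
`S(ρ₋ + Δ) - S(ρ₋)`. -/
theorem max_attained_at_rho_minus {d : ℕ} (ρp ρm : Matrix (Fin d) (Fin d) ℂ)
    (hp : IsDensity ρp) (hm : IsDensity ρm) (horth : ρp * ρm = 0)
    (ε : ℝ) (hε : ε ∈ Set.Ioo (0 : ℝ) 1)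
    (Δ : Matrix (Fin d) (Fin d) ℂ) (hΔdef : Δ = ε • (ρp - ρm)) (hΔ : Δ.IsHermitian) :
    (∀ ω : Matrix (Fin d) (Fin d) ℂ, ∀ hω : IsDensity ω,
      (∀ i, 0 ≤ eigDown Δ hΔ i + eigUp ω hω.1.isHermitian i) →
      shannonH (fun i => eigDown Δ hΔ i + eigUp ω hω.1.isHermitian i) - vnEntropy ω ≤
        vnEntropy (ρm + Δ) - vnEntropy ρm) ∧
    shannonH (fun i => eigDown Δ hΔ i + eigUp ρm hm.1.isHermitian i) - vnEntropy ρm =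
      vnEntropy (ρm + Δ) - vnEntropy ρm := by
  obtain ⟨hε0, hε1⟩ := hε
  have hact (j : Fin d) : ρm *ᵥ ⇑(hΔ.eigenvectorBasis j) =
      minusEigenvalue ε (hΔ.eigenvalues j) • ⇑(hΔ.eigenvectorBasis j) :=
    mulVec_eq_minusEigenvalue_smul hp.1 hm.1 horth hε0 (hΔdef ▸ hΔ.mulVec_eigenvectorBasis j)
  have hup : eigUp ρm hm.1.isHermitian = minusEigenvalue ε ∘ eigDown Δ hΔ :=
    eigUp_eq_comp_eigDown hΔ _ (minusEigenvalue_antitone hε0) hact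
  have hS : vnEntropy (ρm + Δ) =
      shannonH (fun i => eigDown Δ hΔ i + eigUp ρm hm.1.isHermitian i) := by
    rw [hup, vnEntropy_eq_sum_eta_comp_eigDown hΔ (hm.1.isHermitian.add hΔ)
      (fun x => x + minusEigenvalue ε x)]
    · rfl
    · intro j
      rw [add_mulVec, hact j, hΔ.mulVec_eigenvectorBasis j, add_smul, add_comm]
  refine ⟨fun ω hω hpos => ?_, by rw [hS]⟩
  rw [hS, vnEntropy_eq_shannonH_eigUp hω.1.isHermitian,
    vnEntropy_eq_shannonH_eigUp hm.1.isHermitian, hup]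
  refine shannonH_add_sub_shannonH_le hε0 hε1 _ _ (fun i => hω.1.eigenvalues_nonneg _) hpos ?_
  rw [hω.sum_eigUp, ← hm.sum_eigUp, hup]
  rfl
end
end

section
/- Fix b₁,...,b_m ≥ 0 with ∑ b_j = 1 and ε ∈ (0,1). Over all z₁,...,z_m ≥ 0 with ∑ z_j = 1 and z_j ≥ ε b_j for all j, the maximum of ∑_j [η(z_j − ε b_j) − η(z_j)] is attained at z = b, where η(u) = −u log u. -/
open Matrix BigOperators
open scoped ComplexOrder

noncomputable section

private lemma key_ineq (u v c : ℝ) (hu : 0 ≤ u) (hv : 0 < v) (hc : 0 ≤ c) :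
    (u + c) * Real.log (u + c) - (u + c) * Real.log (v + c) ≤
      u * Real.log u - u * Real.log v := by
  rcases eq_or_lt_of_le hu with hu0 | hu0
  · -- u = 0
    subst hu0
    simp only [zero_add, Real.log_zero, mul_zero, zero_mul, sub_zero, zero_sub]
    rcases eq_or_lt_of_le hc with hc0 | hc0
    · subst hc0; simp
    · have h1 : Real.log c ≤ Real.log (v + c) :=
        Real.log_le_log hc0 (by linarith)
      nlinarith
  · -- u > 0
    have hvc : 0 < v + c := by linarith
    have huc : 0 < u + c := by linarith
    have ht1 : 0 < (u + c) * v / (u * (v + c)) := by positivity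
    have ht2 : 0 < (u + c) / (v + c) := by positivity
    have h1 := Real.log_le_sub_one_of_pos ht1
    have h2 := Real.log_le_sub_one_of_pos ht2
    have e1 : Real.log ((u + c) * v / (u * (v + c)))
        = Real.log (u + c) + Real.log v - (Real.log u + Real.log (v + c)) := by
      rw [Real.log_div (by positivity) (by positivity), Real.log_mul (by positivity) (by positivity),
        Real.log_mul (by positivity) (by positivity)]
    have e2 : Real.log ((u + c) / (v + c)) = Real.log (u + c) - Real.log (v + c) := by
      rw [Real.log_div (by positivity) (by positivity)]
    rw [e1] at h1
    rw [e2] at h2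
    have hA : u * (Real.log (u + c) + Real.log v - (Real.log u + Real.log (v + c)))
        ≤ u * ((u + c) * v / (u * (v + c)) - 1) := by
      exact mul_le_mul_of_nonneg_left h1 hu
    have hB : c * (Real.log (u + c) - Real.log (v + c))
        ≤ c * ((u + c) / (v + c) - 1) := mul_le_mul_of_nonneg_left h2 hc
    have hA' : u * ((u + c) * v / (u * (v + c)) - 1) = c * (v - u) / (v + c) := by
      field_simp; ring
    have hB' : c * ((u + c) / (v + c) - 1) = c * (u - v) / (v + c) := by
      field_simp
      try ring
    rw [hA'] at hA
    rw [hB'] at hB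
    have hsum : c * (v - u) / (v + c) + c * (u - v) / (v + c) = 0 := by ring
    nlinarith

private lemma perj (ε b z : ℝ) (hε0 : 0 < ε) (hε1 : ε < 1) (hb : 0 ≤ b)
    (hz : ε * b ≤ z) :
    eta (z - ε * b) - eta z ≤
      eta (b - ε * b) - eta b + (-Real.log (1 - ε)) * (z - b) := by
  rcases eq_or_lt_of_le hb with hb0 | hb0
  · subst hb0
    simp only [mul_zero, sub_zero]
    have hL : 0 ≤ -Real.log (1 - ε) := by
      have : Real.log (1 - ε) ≤ 0 := Real.log_nonpos (by linarith) (by linarith)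
      linarith
    have hz0 : 0 ≤ z := by linarith
    simp only [eta, Real.log_zero, mul_zero, neg_zero, sub_self, zero_sub, neg_neg] 
    nlinarith
  · -- b > 0
    have hv : 0 < (1 - ε) * b := by nlinarith
    have hu : 0 ≤ z - ε * b := by linarith
    have hc : 0 ≤ ε * b := by positivity
    have key := key_ineq (z - ε * b) ((1 - ε) * b) (ε * b) hu hv hc
    have e1 : z - ε * b + ε * b = z := by ring
    have e2 : (1 - ε) * b + ε * b = b := by ring
    rw [e1, e2] at key
    have hL : Real.log (1 - ε) = Real.log ((1 - ε) * b) - Real.log b := by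
      rw [Real.log_mul (by linarith) (ne_of_gt hb0)]; ring
    have hbb : b - ε * b = (1 - ε) * b := by ring
    rw [hbb, hL]
    simp only [eta]
    nlinarith [key]

/-- the maximum of `∑ⱼ [η(zⱼ - ε bⱼ) - η(zⱼ)]` over probability vectors `z`
with `zⱼ ≥ ε bⱼ` is attained at `z = b`. -/
theorem sum_eta_max_at_b (m : ℕ) (hm : 0 < m) (b : Fin m → ℝ)
    (hb : ∀ j, 0 ≤ b j) (hb1 : ∑ j, b j = 1)
    (ε : ℝ) (hε : ε ∈ Set.Ioo (0 : ℝ) 1)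
    (z : Fin m → ℝ) (hz : ∀ j, 0 ≤ z j) (hz1 : ∑ j, z j = 1)
    (hzb : ∀ j, ε * b j ≤ z j) :
    ∑ j, (eta (z j - ε * b j) - eta (z j)) ≤ ∑ j, (eta (b j - ε * b j) - eta (b j)) := by
  
  have hε0 := hε.1
  have hε1 := hε.2
  have hL : ∑ j, (-Real.log (1 - ε)) * (z j - b j) = 0 := by
    rw [← Finset.mul_sum, Finset.sum_sub_distrib, hz1, hb1]
    simp
  calc ∑ j, (eta (z j - ε * b j) - eta (z j))
      ≤ ∑ j, (eta (b j - ε * b j) - eta (b j) + (-Real.log (1 - ε)) * (z j - b j)) := by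
        apply Finset.sum_le_sum
        intro j _
        exact perj ε (b j) (z j) hε0 hε1 (hb j) (hzb j)
    _ = ∑ j, (eta (b j - ε * b j) - eta (b j)) + ∑ j, (-Real.log (1 - ε)) * (z j - b j) := by
        rw [Finset.sum_add_distrib]
    _ = ∑ j, (eta (b j - ε * b j) - eta (b j)) := by rw [hL]; ring
end
end

section
/- Let ρ, σ be density matrices with mutually orthogonal supports, and let ω = t ρ + (1 − t) ν for some t ∈ (0,1) and density matrix ν, with ω positive definite. Then D(ρ‖ω) − D(σ‖ω) ≤ log(1/t − 1). -/
open Matrix BigOperators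
open scoped ComplexOrder

noncomputable section

/-!
For Hermitian `A`, `B` with eigenpairs `(aᵢ, uᵢ)` and `(bⱼ, vⱼ)`,
`D(A‖B) = ∑ᵢ aᵢ (log aᵢ - ∑ⱼ Tᵢⱼ log bⱼ)` with the doubly stochastic overlap `Tᵢⱼ = ‖⟪uᵢ, vⱼ⟫‖²`.
Let `(pᵢ, eᵢ)`, `(qᵢ, fᵢ)` and `λⱼ` be the spectral data of `ρ`, `σ` and `ω`; both bounds come from
concavity of `log`.

Since `t ρ ≤ ω`, testing against `x = ω⁻¹ eᵢ` gives `t pᵢ ⟪eᵢ, ω⁻¹ eᵢ⟫ ≤ 1`, while Jensen gives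
`-∑ⱼ Tᵢⱼ log λⱼ ≤ log ⟪eᵢ, ω⁻¹ eᵢ⟫`; hence `D(ρ‖ω) ≤ -log t`.

On the support of `σ` the state `ρ` vanishes, so there `⟪fᵢ, ω fᵢ⟫ = (1 - t) ⟪fᵢ, ν fᵢ⟫`, whose
sum is at most `1 - t`. Jensen gives `∑ⱼ Tᵢⱼ log λⱼ ≤ log ⟪fᵢ, ω fᵢ⟫`, and Gibbs' inequality then
yields `D(σ‖ω) ≥ -log ∑_{qᵢ ≠ 0} ⟪fᵢ, ω fᵢ⟫ ≥ -log (1 - t)`.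
-/

open Finset Real

theorem Real.neg_log_le_sum_mul_log_sub_log {ι : Type*} [Fintype ι] {q c : ι → ℝ} {s : ℝ}
    (hq : ∀ i, 0 ≤ q i) (hq1 : ∑ i, q i = 1) (hc : ∀ i, 0 < c i)
    (hs : ∑ i with q i ≠ 0, c i ≤ s) :
    -log s ≤ ∑ i, q i * (log (q i) - log (c i)) := by
  set S := univ.filter fun i => q i ≠ 0
  have hqS : ∑ i ∈ S, q i = 1 := by rw [sum_filter_ne_zero, hq1]
  have hpos : ∀ i ∈ S, 0 < q i := fun i hi => (hq i).lt_of_ne' (mem_filter.1 hi).2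
  have hcS : 0 < ∑ i ∈ S, c i :=
    sum_pos (fun i _ => hc i) (nonempty_of_sum_ne_zero (hqS ▸ one_ne_zero))
  have hJ : ∑ i ∈ S, q i * log (c i / q i) ≤ log (∑ i ∈ S, c i) := by
    have := strictConcaveOn_log_Ioi.concaveOn.le_map_sum (fun i hi => (hpos i hi).le) hqS
      (fun i hi => div_pos (hc i) (hpos i hi))
    simp only [smul_eq_mul] at this
    rwa [sum_congr rfl fun i hi => mul_div_cancel₀ (c i) (hpos i hi).ne'] at this
  calc -log s ≤ -log (∑ i ∈ S, c i) := neg_le_neg (log_le_log hcS hs)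
    _ ≤ -∑ i ∈ S, q i * log (c i / q i) := neg_le_neg hJ
    _ = ∑ i ∈ S, q i * (log (q i) - log (c i)) := by
      rw [← sum_neg_distrib]
      refine sum_congr rfl fun i hi => ?_
      rw [log_div (hc i).ne' (hpos i hi).ne']
      ring
    _ = ∑ i, q i * (log (q i) - log (c i)) := sum_filter_of_ne fun i _ h => left_ne_zero_of_mul h

section

variable {n : Type*} [Fintype n]

lemma Matrix.PosSemidef.smul_re_dotProduct_mulVec_le {ρ ω : Matrix n n ℂ} {t : ℝ}
    (h : (ω - t • ρ).PosSemidef) (x : n → ℂ) :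
    t * (star x ⬝ᵥ (ρ *ᵥ x)).re ≤ (star x ⬝ᵥ (ω *ᵥ x)).re := by
  have := (Complex.le_def.mp (h.dotProduct_mulVec_nonneg x)).1
  rw [sub_mulVec, smul_mulVec, dotProduct_sub, dotProduct_smul, Complex.sub_re,
    Complex.real_smul, Complex.re_ofReal_mul, Complex.zero_re] at this
  linarith

variable [DecidableEq n]

namespace Matrix.IsHermitian

variable {A B : Matrix n n ℂ}

lemma eq_eigenvectorUnitary_mul_diagonal_mul_star (hA : A.IsHermitian) :
    A = (hA.eigenvectorUnitary : Matrix n n ℂ) * diagonal (fun i => (hA.eigenvalues i : ℂ)) *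
      star (hA.eigenvectorUnitary : Matrix n n ℂ) := by
  conv_lhs => rw [hA.spectral_theorem, Unitary.conjStarAlgAut_apply]
  rfl

/-- `‖⟪uᵢ, vⱼ⟫‖²` for the eigenvector bases `u` of `A` and `v` of `B`. -/
def overlap (hA : A.IsHermitian) (hB : B.IsHermitian) (i j : n) : ℝ :=
  ‖(star (hA.eigenvectorUnitary : Matrix n n ℂ) * hB.eigenvectorUnitary) i j‖ ^ 2

lemma overlap_nonneg (hA : A.IsHermitian) (hB : B.IsHermitian) (i j : n) :
    0 ≤ hA.overlap hB i j :=
  sq_nonneg _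

lemma sum_overlap_right (hA : A.IsHermitian) (hB : B.IsHermitian) (i : n) :
    ∑ j, hA.overlap hB i j = 1 := by
  set W := star (hA.eigenvectorUnitary : Matrix n n ℂ) * hB.eigenvectorUnitary
  have hW : W * star W = 1 := by
    rw [star_mul, star_star, Matrix.mul_assoc,
      ← Matrix.mul_assoc (hB.eigenvectorUnitary : Matrix n n ℂ),
      Unitary.mul_star_self_of_mem hB.eigenvectorUnitary.2, Matrix.one_mul,
      Unitary.star_mul_self_of_mem hA.eigenvectorUnitary.2]
  have hii := congrFun (congrFun hW i) i
  simp only [mul_apply, star_apply, RCLike.star_def, Complex.mul_conj', one_apply_eq] at hii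
  exact_mod_cast hii

lemma overlap_self (hA : A.IsHermitian) (i j : n) :
    hA.overlap hA i j = if i = j then 1 else 0 := by
  simp only [overlap, Unitary.star_mul_self_of_mem hA.eigenvectorUnitary.2, one_apply]
  split_ifs <;> simp

lemma re_trace_mul_mlog (hA : A.IsHermitian) (hB : B.IsHermitian) :
    ((A * mlog B).trace).re =
      ∑ i, hA.eigenvalues i * ∑ j, hA.overlap hB i j * log (hB.eigenvalues j) := by
  set U := (hA.eigenvectorUnitary : Matrix n n ℂ)
  set W := star U * hB.eigenvectorUnitary
  set D := diagonal (fun i => (hA.eigenvalues i : ℂ))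
  set L := diagonal (fun j => (log (hB.eigenvalues j) : ℂ))
  have hUU : U * star U = 1 := Unitary.mul_star_self_of_mem hA.eigenvectorUnitary.2
  have hUsU : star U * U = 1 := Unitary.star_mul_self_of_mem hA.eigenvectorUnitary.2
  have hmlog : mlog B = U * (W * L * star W) * star U := by
    simp only [mlog, dif_pos hB, W, star_mul, star_star, ← Matrix.mul_assoc, hUU, Matrix.one_mul]
    simp only [Matrix.mul_assoc, hUU, Matrix.mul_one]
    rfl
  have htrace : (A * mlog B).trace = (D * (W * L * star W)).trace := by
    have hconj : A * mlog B = U * (D * (W * L * star W)) * star U := by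
      rw [hA.eq_eigenvectorUnitary_mul_diagonal_mul_star, hmlog]
      simp only [Matrix.mul_assoc]
      rw [← Matrix.mul_assoc (star U) U, hUsU, Matrix.one_mul]
    rw [hconj, trace_mul_cycle, ← Matrix.mul_assoc, hUsU, Matrix.one_mul]
  rw [htrace, trace, Complex.re_sum]
  refine sum_congr rfl fun i _ => ?_
  rw [diag_apply, diagonal_mul, mul_apply, mul_sum, mul_sum, Complex.re_sum]
  refine sum_congr rfl fun j _ => ?_
  have hterm : (hA.eigenvalues i : ℂ) * ((W * L) i j * star W j i) =
      ((hA.eigenvalues i * (‖W i j‖ ^ 2 * log (hB.eigenvalues j)) : ℝ) : ℂ) := by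
    rw [mul_diagonal, star_apply, Complex.star_def]
    push_cast
    linear_combination (↑(hA.eigenvalues i) * ↑(log (hB.eigenvalues j)) : ℂ) *
      Complex.mul_conj' (W i j)
  rw [hterm, Complex.ofReal_re]
  rfl

lemma re_trace_mul_mlog_self (hA : A.IsHermitian) :
    ((A * mlog A).trace).re = ∑ i, hA.eigenvalues i * log (hA.eigenvalues i) := by
  simp [re_trace_mul_mlog hA hA, overlap_self]

lemma re_dotProduct_mulVec (hA : A.IsHermitian) (x : n → ℂ) :
    (star x ⬝ᵥ (A *ᵥ x)).re =
      ∑ i, hA.eigenvalues i * ‖(star (hA.eigenvectorUnitary : Matrix n n ℂ) *ᵥ x) i‖ ^ 2 := by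
  set U := (hA.eigenvectorUnitary : Matrix n n ℂ)
  set y := star U *ᵥ x
  have hy : star y = star x ᵥ* U := by
    rw [star_mulVec, star_eq_conjTranspose, conjTranspose_conjTranspose]
  have hxy :
      star x ⬝ᵥ (A *ᵥ x) = star y ⬝ᵥ (diagonal (fun i => (hA.eigenvalues i : ℂ)) *ᵥ y) := by
    conv_lhs => rw [hA.eq_eigenvectorUnitary_mul_diagonal_mul_star]
    rw [← mulVec_mulVec, ← mulVec_mulVec, dotProduct_mulVec, hy]
  rw [hxy, dotProduct, Complex.re_sum]
  refine sum_congr rfl fun i _ => ?_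
  rw [mulVec_diagonal, Pi.star_apply, Complex.star_def, mul_left_comm, Complex.conj_mul']
  norm_cast

lemma sum_dotProduct_mulVec_eigenvectorBasis (hA : A.IsHermitian) (M : Matrix n n ℂ) :
    ∑ i, star ⇑(hA.eigenvectorBasis i) ⬝ᵥ (M *ᵥ ⇑(hA.eigenvectorBasis i)) = M.trace := by
  set U := (hA.eigenvectorUnitary : Matrix n n ℂ)
  have hterm : ∀ i, star ⇑(hA.eigenvectorBasis i) ⬝ᵥ (M *ᵥ ⇑(hA.eigenvectorBasis i)) =
      (star U * M * U) i i := fun i => by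
    simp only [dotProduct, mulVec, mul_apply, star_apply, Pi.star_apply, mul_sum, U,
      eigenvectorUnitary_apply]
    rw [sum_comm]
    simp only [sum_mul, mul_assoc]
  rw [sum_congr rfl fun i _ => hterm i]
  change (star U * M * U).trace = M.trace
  rw [trace_mul_cycle, Unitary.mul_star_self_of_mem hA.eigenvectorUnitary.2, Matrix.one_mul]

lemma re_dotProduct_mulVec_eigenvectorBasis (hA : A.IsHermitian) (hB : B.IsHermitian) (i : n) :
    (star ⇑(hA.eigenvectorBasis i) ⬝ᵥ (B *ᵥ ⇑(hA.eigenvectorBasis i))).re =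
      ∑ j, hA.overlap hB i j * hB.eigenvalues j := by
  rw [hB.re_dotProduct_mulVec]
  refine sum_congr rfl fun j _ => ?_
  have : (star (hB.eigenvectorUnitary : Matrix n n ℂ) *ᵥ ⇑(hA.eigenvectorBasis i)) j =
      star ((star (hA.eigenvectorUnitary : Matrix n n ℂ) * hB.eigenvectorUnitary) i j) := by
    simp only [mulVec, dotProduct, mul_apply, star_apply, star_sum, star_mul', star_star,
      eigenvectorUnitary_apply, mul_comm]
  rw [this, norm_star, overlap, mul_comm]

lemma mulVec_eigenvectorBasis_eq_zero_of_mul_eq_zero {ρ : Matrix n n ℂ} (hA : A.IsHermitian)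
    (h : ρ * A = 0) {i : n} (hi : hA.eigenvalues i ≠ 0) :
    ρ *ᵥ ⇑(hA.eigenvectorBasis i) = 0 := by
  have hzero : ρ *ᵥ (A *ᵥ ⇑(hA.eigenvectorBasis i)) = 0 := by
    rw [mulVec_mulVec, h, zero_mulVec]
  rw [hA.mulVec_eigenvectorBasis, mulVec_smul] at hzero
  exact (smul_eq_zero.mp hzero).resolve_left (by exact_mod_cast hi)

end Matrix.IsHermitian

namespace Matrix

variable {A B : Matrix n n ℂ}

lemma PosSemidef.eigenvalues_mul_norm_sq_le (hA : A.PosSemidef) (x : n → ℂ) (i : n) :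
    hA.1.eigenvalues i * ‖(star (hA.1.eigenvectorUnitary : Matrix n n ℂ) *ᵥ x) i‖ ^ 2 ≤
      (star x ⬝ᵥ (A *ᵥ x)).re := by
  rw [hA.1.re_dotProduct_mulVec]
  exact single_le_sum (f := fun k => hA.1.eigenvalues k *
    ‖(star (hA.1.eigenvectorUnitary : Matrix n n ℂ) *ᵥ x) k‖ ^ 2)
    (fun k _ => mul_nonneg (hA.eigenvalues_nonneg k) (sq_nonneg _)) (mem_univ i)

/-- The witness is `x = B⁻¹ uᵢ`, for `uᵢ` the `i`-th eigenvector of `A`, built in the eigenbasis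
of `B`. -/
lemma PosDef.exists_re_dotProduct_mulVec_eq (hA : A.IsHermitian) (hB : B.PosDef) (i : n) :
    ∃ x : n → ℂ,
      (star x ⬝ᵥ (B *ᵥ x)).re = ∑ j, hA.overlap hB.1 i j / hB.1.eigenvalues j ∧
      (star (hA.eigenvectorUnitary : Matrix n n ℂ) *ᵥ x) i =
        ((∑ j, hA.overlap hB.1 i j / hB.1.eigenvalues j : ℝ) : ℂ) := by
  set U := (hA.eigenvectorUnitary : Matrix n n ℂ)
  set V := (hB.1.eigenvectorUnitary : Matrix n n ℂ)
  set W := star U * V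
  set z : n → ℂ := fun j => star (W i j) / (hB.1.eigenvalues j : ℂ)
  refine ⟨V *ᵥ z, ?_, ?_⟩
  · rw [hB.1.re_dotProduct_mulVec, mulVec_mulVec,
      Unitary.star_mul_self_of_mem hB.1.eigenvectorUnitary.2, one_mulVec]
    refine sum_congr rfl fun j _ => ?_
    rw [norm_div, norm_star, Complex.norm_real, Real.norm_of_nonneg (hB.eigenvalues_pos j).le,
      IsHermitian.overlap]
    field_simp [(hB.eigenvalues_pos j).ne']
    rfl
  · rw [mulVec_mulVec, mulVec, dotProduct, Complex.ofReal_sum]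
    refine sum_congr rfl fun j _ => ?_
    rw [Complex.ofReal_div, IsHermitian.overlap, Complex.ofReal_pow, ← Complex.mul_conj',
      mul_div_assoc]
    rfl

end Matrix

lemma relEnt_eq_sum_overlap {A B : Matrix n n ℂ} (hA : A.IsHermitian) (hB : B.IsHermitian) :
    relEnt A B = ∑ i, hA.eigenvalues i *
      (log (hA.eigenvalues i) - ∑ j, hA.overlap hB i j * log (hB.eigenvalues j)) := by
  rw [relEnt, Matrix.mul_sub, trace_sub, Complex.sub_re, hA.re_trace_mul_mlog_self,
    hA.re_trace_mul_mlog hB, ← sum_sub_distrib]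
  simp only [mul_sub]

lemma IsDensity.sum_eigenvalues {ρ : Matrix n n ℂ} (hρ : IsDensity ρ) :
    ∑ i, hρ.1.1.eigenvalues i = 1 := by
  have h : ((∑ i, hρ.1.1.eigenvalues i : ℝ) : ℂ) = 1 := by
    push_cast
    exact hρ.1.1.trace_eq_sum_eigenvalues.symm.trans hρ.2
  exact_mod_cast h

variable {ρ σ ν ω : Matrix n n ℂ}

lemma log_mul_le_sum_overlap_mul_log (hρ : ρ.PosSemidef) (hω : ω.PosDef) {t : ℝ} (ht : 0 < t)
    (hle : (ω - t • ρ).PosSemidef) {i : n} (hi : 0 < hρ.1.eigenvalues i) :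
    log (t * hρ.1.eigenvalues i) ≤ ∑ j, hρ.1.overlap hω.1 i j * log (hω.1.eigenvalues j) := by
  set p := hρ.1.eigenvalues i
  set c := ∑ j, hρ.1.overlap hω.1 i j / hω.1.eigenvalues j
  obtain ⟨x, hxω, hxρ⟩ := hω.exists_re_dotProduct_mulVec_eq hρ.1 i
  have hc : 0 < c := by
    have := (convex_Ioi (0 : ℝ)).sum_mem (t := univ) (fun j _ => hρ.1.overlap_nonneg hω.1 i j)
      (hρ.1.sum_overlap_right hω.1 i) (fun j _ => inv_pos.2 (hω.eigenvalues_pos j))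
    simpa [c, div_eq_mul_inv] using this
  have hJ : -∑ j, hρ.1.overlap hω.1 i j * log (hω.1.eigenvalues j) ≤ log c := by
    have := strictConcaveOn_log_Ioi.concaveOn.le_map_sum (t := univ)
      (fun j _ => hρ.1.overlap_nonneg hω.1 i j) (hρ.1.sum_overlap_right hω.1 i)
      (fun j _ => inv_pos.2 (hω.eigenvalues_pos j))
    simpa [c, div_eq_mul_inv, log_inv, ← sum_neg_distrib] using this
  have hquad : t * p * c ^ 2 ≤ c := calc
    t * p * c ^ 2 = t * (p * ‖(star (hρ.1.eigenvectorUnitary : Matrix n n ℂ) *ᵥ x) i‖ ^ 2) := by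
      rw [hxρ, Complex.norm_real, norm_of_nonneg hc.le]; ring
    _ ≤ t * (star x ⬝ᵥ (ρ *ᵥ x)).re :=
      mul_le_mul_of_nonneg_left (hρ.eigenvalues_mul_norm_sq_le x i) ht.le
    _ ≤ (star x ⬝ᵥ (ω *ᵥ x)).re := hle.smul_re_dotProduct_mulVec_le x
    _ = c := hxω
  have hlog : log (t * p) + log c ≤ 0 := by
    rw [← log_mul (by positivity) hc.ne']
    exact log_nonpos (by positivity) (by nlinarith)
  linarith

lemma relEnt_le_neg_log (hρ : IsDensity ρ) (hω : ω.PosDef) {t : ℝ} (ht : 0 < t)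
    (hle : (ω - t • ρ).PosSemidef) :
    relEnt ρ ω ≤ -log t := by
  rw [relEnt_eq_sum_overlap hρ.1.1 hω.1]
  calc _ ≤ ∑ i, hρ.1.1.eigenvalues i * -log t := sum_le_sum fun i _ => ?_
    _ = -log t := by rw [← sum_mul, hρ.sum_eigenvalues, one_mul]
  rcases (hρ.1.eigenvalues_nonneg i).eq_or_lt with hi | hi
  · rw [← hi, zero_mul, zero_mul]
  · refine mul_le_mul_of_nonneg_left ?_ hi.le
    have := log_mul_le_sum_overlap_mul_log hρ.1 hω ht hle hi
    rw [log_mul ht.ne' hi.ne'] at this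
    linarith

lemma neg_log_le_relEnt (hσ : IsDensity σ) (hω : ω.PosDef) {s : ℝ}
    (hs : ∑ i with hσ.1.1.eigenvalues i ≠ 0,
      (star ⇑(hσ.1.1.eigenvectorBasis i) ⬝ᵥ (ω *ᵥ ⇑(hσ.1.1.eigenvectorBasis i))).re ≤ s) :
    -log s ≤ relEnt σ ω := by
  set c := fun i => (star ⇑(hσ.1.1.eigenvectorBasis i) ⬝ᵥ (ω *ᵥ ⇑(hσ.1.1.eigenvectorBasis i))).re
  have hc : ∀ i, 0 < c i := fun i =>
    hω.re_dotProduct_pos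
      ((WithLp.ofLp_eq_zero 2).ne.2 (hσ.1.1.eigenvectorBasis.orthonormal.ne_zero i))
  have hJ : ∀ i, ∑ j, hσ.1.1.overlap hω.1 i j * log (hω.1.eigenvalues j) ≤ log (c i) := fun i => by
    have := strictConcaveOn_log_Ioi.concaveOn.le_map_sum (t := univ)
      (fun j _ => hσ.1.1.overlap_nonneg hω.1 i j) (hσ.1.1.sum_overlap_right hω.1 i)
      (fun j _ => hω.eigenvalues_pos j)
    simpa [c, hσ.1.1.re_dotProduct_mulVec_eigenvectorBasis hω.1] using this
  calc -log s ≤ ∑ i, hσ.1.1.eigenvalues i * (log (hσ.1.1.eigenvalues i) - log (c i)) :=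
        neg_log_le_sum_mul_log_sub_log hσ.1.eigenvalues_nonneg hσ.sum_eigenvalues hc hs
    _ ≤ relEnt σ ω := by
      rw [relEnt_eq_sum_overlap hσ.1.1 hω.1]
      exact sum_le_sum fun i _ =>
        mul_le_mul_of_nonneg_left (sub_le_sub_left (hJ i) _) (hσ.1.eigenvalues_nonneg i)

lemma sum_re_dotProduct_mulVec_eigenvectorBasis_le (hσ : σ.IsHermitian) (hν : IsDensity ν)
    (horth : ρ * σ = 0) {t : ℝ} (ht : t ≤ 1) :
    ∑ i with hσ.eigenvalues i ≠ 0, (star ⇑(hσ.eigenvectorBasis i) ⬝ᵥ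
      ((t • ρ + (1 - t) • ν) *ᵥ ⇑(hσ.eigenvectorBasis i))).re ≤ 1 - t := by
  set d := fun i => (star ⇑(hσ.eigenvectorBasis i) ⬝ᵥ (ν *ᵥ ⇑(hσ.eigenvectorBasis i))).re
  have hd : ∀ i, 0 ≤ d i := fun i =>
    (Complex.le_def.mp (hν.1.dotProduct_mulVec_nonneg _)).1
  have hd1 : ∑ i, d i = 1 := by
    rw [← Complex.re_sum, hσ.sum_dotProduct_mulVec_eigenvectorBasis, hν.2, Complex.one_re]
  calc _ = ∑ i with hσ.eigenvalues i ≠ 0, (1 - t) * d i := by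
        refine sum_congr rfl fun i hi => ?_
        rw [add_mulVec, smul_mulVec, smul_mulVec,
          hσ.mulVec_eigenvectorBasis_eq_zero_of_mul_eq_zero horth (mem_filter.1 hi).2, smul_zero,
          zero_add, dotProduct_smul, Complex.real_smul, Complex.re_ofReal_mul]
    _ ≤ ∑ i, (1 - t) * d i :=
        sum_le_sum_of_subset_of_nonneg (filter_subset _ _)
          fun i _ _ => mul_nonneg (by linarith) (hd i)
    _ = 1 - t := by rw [← mul_sum, hd1, mul_one]

end

/-- for `ρ ⊥ σ` and `ω = t ρ + (1-t) ν` positive definite,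
`D(ρ‖ω) - D(σ‖ω) ≤ log(1/t - 1)`. -/
theorem relEnt_diff_le {n : Type*} [Fintype n] [DecidableEq n]
    (ρ σ ν ω : Matrix n n ℂ) (hρ : IsDensity ρ) (hσ : IsDensity σ) (hν : IsDensity ν)
    (horth : ρ * σ = 0) (t : ℝ) (ht : t ∈ Set.Ioo (0 : ℝ) 1)
    (hω : ω = t • ρ + (1 - t) • ν) (hωpd : ω.PosDef) :
    relEnt ρ ω - relEnt σ ω ≤ Real.log (1 / t - 1) := by
  obtain ⟨ht0, ht1⟩ := ht
  subst hω
  have hρω : relEnt ρ _ ≤ -log t := relEnt_le_neg_log hρ hωpd ht0 <| by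
    rw [add_sub_cancel_left]
    exact hν.1.smul (sub_nonneg.2 ht1.le)
  have hσω : -log (1 - t) ≤ relEnt σ _ :=
    neg_log_le_relEnt hσ hωpd (sum_re_dotProduct_mulVec_eigenvectorBasis_le hσ.1.1 hν horth ht1.le)
  have hlog : log (1 / t - 1) = log (1 - t) - log t := by
    rw [← log_div (sub_pos.2 ht1).ne' ht0.ne']
    field_simp
  linarith
end
end

section
/- For density matrices σ₁ positive definite and σ₂, and any density matrix ρ with (1/2)‖σ₁ − σ₂‖₁ ≤ δ, one has Tr(ρ (log σ₂ − log σ₁)) ≤ log(1 + δ / λ_min(σ₁)), where λ_min(σ₁) is the minimum eigenvalue of σ₁ (and σ₂ is assumed positive definite so log σ₂ is defined). -/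
open Matrix BigOperators
open scoped ComplexOrder

noncomputable section

/-!
Write `λ` for the least eigenvalue of `σ₁` and `c = 1 + δ / λ`. Since `σ₁ - σ₂` is traceless, each
of its eigenvalues is at most half its trace norm in absolute value, so `σ₂ ≤ σ₁ + δ ≤ c σ₁` in
the Loewner order. The logarithm is operator monotone, hence `log σ₂ ≤ log (c σ₁) = log c + log σ₁`,
and pairing with the state `ρ` gives `Tr ρ (log σ₂ - log σ₁) ≤ log c`.
-/

open scoped MatrixOrder Matrix.Norms.L2Operator

theorem abs_le_half_sum_abs_of_sum_eq_zero {ι : Type*} [Fintype ι] {x : ι → ℝ}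
    (hx : ∑ j, x j = 0) (i : ι) : |x i| ≤ (∑ j, |x j|) / 2 := by
  classical
  have hrest : ∑ j ∈ Finset.univ.erase i, x j = -x i := by
    rw [eq_neg_iff_add_eq_zero, Finset.sum_erase_add _ _ (Finset.mem_univ i), hx]
  have h := Finset.abs_sum_le_sum_abs x (Finset.univ.erase i)
  rw [hrest, abs_neg] at h
  rw [← Finset.add_sum_erase _ _ (Finset.mem_univ i)]
  linarith

theorem traceNorm_nonneg {n : Type*} [Fintype n] [DecidableEq n] (A : Matrix n n ℂ) :
    0 ≤ traceNorm A := by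
  unfold traceNorm
  split_ifs <;> positivity

section CStarAlgebra

variable {A : Type*} [CStarAlgebra A] [PartialOrder A] [StarOrderedRing A]

theorem le_one_add_div_smul_of_le_add_algebraMap {a b : A} {l d : ℝ} (hl : 0 < l) (hd : 0 ≤ d)
    (ha : algebraMap ℝ A l ≤ a) (hb : b ≤ a + algebraMap ℝ A d) : b ≤ (1 + d / l) • a :=
  calc b ≤ a + algebraMap ℝ A d := hb
    _ = a + (d / l) • algebraMap ℝ A l := by
        rw [Algebra.smul_def, ← map_mul, div_mul_cancel₀ d hl.ne']
    _ ≤ a + (d / l) • a := by gcongr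
    _ = (1 + d / l) • a := by rw [add_smul, one_smul]

theorem CFC.log_sub_log_le_of_le_smul {a b : A} {c : ℝ} (hc : 0 < c)
    (ha : IsStrictlyPositive a) (hb : IsStrictlyPositive b) (hab : b ≤ c • a) :
    CFC.log b - CFC.log a ≤ algebraMap ℝ A (Real.log c) := by
  have h := CFC.log_le_log hab
  rw [CFC.log_smul' a hc] at h
  exact sub_le_iff_le_add.mpr h

end CStarAlgebra

namespace Matrix

variable {n : Type*} [Fintype n] [DecidableEq n]

theorem IsHermitian.mlog_eq_log {A : Matrix n n ℂ} (hA : A.IsHermitian) : mlog A = CFC.log A := by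
  rw [mlog, dif_pos hA, CFC.log, hA.cfc_eq]
  rfl

theorem IsHermitian.algebraMap_iInf_eigenvalues_le {A : Matrix n n ℂ} (hA : A.IsHermitian) :
    algebraMap ℝ _ (⨅ i, hA.eigenvalues i) ≤ A := by
  rw [algebraMap_le_iff_le_spectrum (ha := hA.isSelfAdjoint), hA.spectrum_real_eq_range_eigenvalues]
  rintro _ ⟨i, rfl⟩
  exact ciInf_le (Finite.bddBelow_range _) i

theorem PosDef.iInf_eigenvalues_pos [Nonempty n] {A : Matrix n n ℂ} (hA : A.PosDef) :
    0 < ⨅ i, hA.isHermitian.eigenvalues i := by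
  obtain ⟨i, hi⟩ := exists_eq_ciInf_of_finite (f := hA.isHermitian.eigenvalues)
  exact hi ▸ hA.eigenvalues_pos i

theorem IsHermitian.abs_le_half_traceNorm_of_trace_eq_zero {G : Matrix n n ℂ}
    (hG : G.IsHermitian) (htr : G.trace = 0) : ∀ x ∈ spectrum ℝ G, |x| ≤ traceNorm G / 2 := by
  have hsum : ∑ i, hG.eigenvalues i = 0 := by
    have h := (hG.trace_eq_sum_eigenvalues (𝕜 := ℂ)).symm.trans htr
    rwa [← RCLike.ofReal_sum, RCLike.ofReal_eq_zero] at h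
  rw [hG.spectrum_real_eq_range_eigenvalues, traceNorm, dif_pos hG]
  rintro _ ⟨i, rfl⟩
  exact abs_le_half_sum_abs_of_sum_eq_zero hsum i

theorem IsHermitian.le_add_algebraMap_of_half_traceNorm_le {A B : Matrix n n ℂ}
    (hA : A.IsHermitian) (hB : B.IsHermitian) (htr : A.trace = B.trace) {δ : ℝ}
    (hδ : traceNorm (A - B) / 2 ≤ δ) : B ≤ A + algebraMap ℝ _ δ := by
  have hAB := hA.sub hB
  have hspec := hAB.abs_le_half_traceNorm_of_trace_eq_zero (by rw [trace_sub, htr, sub_self])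
  have h : algebraMap ℝ _ (-δ) ≤ A - B := by
    rw [algebraMap_le_iff_le_spectrum (ha := hAB.isSelfAdjoint)]
    intro x hx
    linarith [neg_abs_le x, hspec x hx]
  rwa [map_neg, neg_le_sub_iff_le_add] at h

theorem PosSemidef.re_trace_mul_le {ρ M : Matrix n n ℂ} (hρ : ρ.PosSemidef) (htr : ρ.trace = 1)
    {r : ℝ} (hM : M ≤ algebraMap ℝ _ r) : (ρ * M).trace.re ≤ r := by
  obtain ⟨B, hB⟩ := CStarAlgebra.nonneg_iff_eq_star_mul_self.mp hρ.nonneg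
  have h : 0 ≤ (ρ * (algebraMap ℝ _ r - M)).trace := by
    rw [hB, ← trace_mul_cycle]
    exact (star_right_conjugate_nonneg (sub_nonneg.mpr hM) B).posSemidef.trace_nonneg
  rw [Algebra.algebraMap_eq_smul_one, mul_sub, Matrix.mul_smul, Matrix.mul_one, trace_sub,
    trace_smul, htr] at h
  simpa using (Complex.le_def.mp h).1

end Matrix

/-- `Tr(ρ (log σ₂ - log σ₁)) ≤ log(1 + δ / λ_min(σ₁))`. -/
theorem trace_log_diff_le {n : Type*} [Fintype n] [DecidableEq n] [Nonempty n]
    (σ₁ σ₂ ρ : Matrix n n ℂ)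
    (h1 : IsDensity σ₁) (h2 : IsDensity σ₂) (hρ : IsDensity ρ)
    (hpd1 : σ₁.PosDef) (hpd2 : σ₂.PosDef)
    (δ : ℝ) (hδ : traceNorm (σ₁ - σ₂) / 2 ≤ δ) :
    ((ρ * (mlog σ₂ - mlog σ₁)).trace).re ≤
      Real.log (1 + δ / (⨅ i, h1.1.isHermitian.eigenvalues i)) := by
  have hσ₁ := h1.1.isHermitian
  have hσ₂ := hpd2.isHermitian
  have hlam : 0 < ⨅ i, hσ₁.eigenvalues i := hpd1.iInf_eigenvalues_pos
  have hσ₂_le : σ₂ ≤ σ₁ + algebraMap ℝ _ δ :=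
    hσ₁.le_add_algebraMap_of_half_traceNorm_le hσ₂ (h1.2.trans h2.2.symm) hδ
  have hδ0 : 0 ≤ δ := (div_nonneg (traceNorm_nonneg _) zero_le_two).trans hδ
  have hlog := CFC.log_sub_log_le_of_le_smul (by positivity) hpd1.isStrictlyPositive
    hpd2.isStrictlyPositive
    (le_one_add_div_smul_of_le_add_algebraMap hlam hδ0 hσ₁.algebraMap_iInf_eigenvalues_le hσ₂_le)
  rw [hσ₂.mlog_eq_log, hσ₁.mlog_eq_log]
  exact hρ.1.re_trace_mul_le hρ.2 hlog
end
end
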